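/- arXiv:2407.10932 — 8 statements merged into one kernel-verified Lean document; each statement's English description precedes it below -/
import Mathlib

section
/- For every n ∈ ℕ and all λ, ℓ > 0, there exists a constant r_{n,λ,ℓ} > ℓ such that the following holds. Let A, B ⊆ ℝ^n be (γ,ℓ,λ,μ)-conelike sets with convex witnesses C_A, C_B, suppose the set S'' in the conelike definition is an n-dimensional simplex with a vertex at the origin, and let z be the translation vector from condition (ii). Set S' = S'' + z, and let F₀, F₁, …, F_n be the facets of S', where F₀ is the facet not containing the vertex z. Then: (1) S' ⊆ C_A ∩ C_B; (2) F₁ ∪ ⋯ ∪ F_n ⊆ ∂C_A ∩ ∂C_B; (3) there exists u ∈ ℝ^n with B(u, 1/r_{n,λ,ℓ}) ⊆ S' ⊆ B(u, r_{n,λ,ℓ}). -/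
open MeasureTheory Pointwise
open scoped RealInnerProductSpace

noncomputable section

/-- A *cone* in `ℝⁿ`: the union `⋃_{s ≥ 0} s•P` for some bounded convex set `P` contained in
a hyperplane not passing through the origin. -/
def IsCone {n : ℕ} (C : Set (EuclideanSpace ℝ (Fin n))) : Prop :=
  ∃ (P : Set (EuclideanSpace ℝ (Fin n))) (v : EuclideanSpace ℝ (Fin n)) (c : ℝ),
    Bornology.IsBounded P ∧ Convex ℝ P ∧ v ≠ 0 ∧ c ≠ 0 ∧
    (∀ x ∈ P, ⟪v, x⟫ = c) ∧
    C = ⋃ s ∈ Set.Ici (0 : ℝ), s • P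

/-- A set obtained by intersecting a cone with a half-space. -/
def IsConeCapHalfspace {n : ℕ} (S : Set (EuclideanSpace ℝ (Fin n))) : Prop :=
  ∃ (C : Set (EuclideanSpace ℝ (Fin n))) (u : EuclideanSpace ℝ (Fin n)) (a : ℝ),
    IsCone C ∧ u ≠ 0 ∧ S = C ∩ {x | ⟪u, x⟫ ≤ a}

/-- The conelike condition of Definition 2.6, with all witnesses (`C_A`, `C_B`, the cone-piece
`S''` and the translation `z` of condition (ii)) explicit. -/
structure ConelikeCore {n : ℕ} (γ ℓ lam μ : ℝ)
    (A B CA CB S'' : Set (EuclideanSpace ℝ (Fin n))) (z : EuclideanSpace ℝ (Fin n)) :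
    Prop where
  convex_CA : Convex ℝ CA
  convex_CB : Convex ℝ CB
  A_subset : A ⊆ CA
  B_subset : B ⊆ CB
  vol_CA : volume CA = ENNReal.ofReal (1 + γ) * volume A
  vol_CB : volume CB = ENNReal.ofReal (1 + γ) * volume B
  vol_A_eq_vol_B : volume A = volume B
  ball_subset_CA : Metric.ball 0 (1 / ℓ) ⊆ CA
  ball_subset_CB : Metric.ball 0 (1 / ℓ) ⊆ CB
  CA_subset_ball : CA ⊆ Metric.ball 0 ℓ
  CB_subset_ball : CB ⊆ Metric.ball 0 ℓ
  cone_piece : IsConeCapHalfspace S''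
  S_subset_A : S'' ⊆ (-z) +ᵥ A
  S_subset_CA : S'' ⊆ (-z) +ᵥ CA
  S_subset_B : S'' ⊆ (-z) +ᵥ B
  S_subset_CB : S'' ⊆ (-z) +ᵥ CB
  A_subset_S : (-z) +ᵥ A ⊆ lam • S''
  CA_subset_S : (-z) +ᵥ CA ⊆ lam • S''
  B_subset_S : (-z) +ᵥ B ⊆ lam • S''
  CB_subset_S : (-z) +ᵥ CB ⊆ lam • S''
  sandwich : ∃ (K : Set (EuclideanSpace ℝ (Fin n))) (x₀ y₀ : EuclideanSpace ℝ (Fin n)),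
    Convex ℝ K ∧
    K ⊆ x₀ +ᵥ A ∧ K ⊆ x₀ +ᵥ CA ∧ K ⊆ y₀ +ᵥ B ∧ K ⊆ y₀ +ᵥ CB ∧
    x₀ +ᵥ A ⊆ (1 + μ) • K ∧ x₀ +ᵥ CA ⊆ (1 + μ) • K ∧
    y₀ +ᵥ B ⊆ (1 + μ) • K ∧ y₀ +ᵥ CB ⊆ (1 + μ) • K

/-- `A, B` are `(γ, ℓ, λ, μ)`-conelike with convex witnesses `C_A, C_B`. -/
def Conelike {n : ℕ} (γ ℓ lam μ : ℝ) (A B CA CB : Set (EuclideanSpace ℝ (Fin n))) : Prop :=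
  ∃ (S'' : Set (EuclideanSpace ℝ (Fin n))) (z : EuclideanSpace ℝ (Fin n)),
    ConelikeCore γ ℓ lam μ A B CA CB S'' z


/-- **Lemma 3.6 (simplex inside the conelike witnesses).**  If `A, B` are conelike with
cone-piece an `n`-dimensional simplex `S'' = co{v₀,…,vₙ}` with vertex `v₀ = 0`, and
`S' = S'' + z`, then `S' ⊆ C_A ∩ C_B`, the facets `F₁,…,Fₙ` of `S'` containing the vertex `z`
lie in `∂C_A ∩ ∂C_B`, and `B(u,1/r) ⊆ S' ⊆ B(u,r)` for some `u` and a constant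
`r = r_{n,λ,ℓ} > ℓ`. -/
theorem lem_conelike_1 (n : ℕ) (lam ℓ : ℝ) (hlam : 0 < lam) (hℓ : 0 < ℓ) :
    ∃ r : ℝ, ℓ < r ∧
      ∀ (γ μ : ℝ) (A B CA CB : Set (EuclideanSpace ℝ (Fin n)))
        (v : Fin (n + 1) → EuclideanSpace ℝ (Fin n)) (z : EuclideanSpace ℝ (Fin n)),
        AffineIndependent ℝ v → v 0 = 0 →
        ConelikeCore γ ℓ lam μ A B CA CB (convexHull ℝ (Set.range v)) z →
        (z +ᵥ convexHull ℝ (Set.range v) ⊆ CA ∩ CB) ∧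
        (∀ i : Fin (n + 1), i ≠ 0 →
          z +ᵥ convexHull ℝ (v '' ({i}ᶜ : Set (Fin (n + 1))))
            ⊆ frontier CA ∩ frontier CB) ∧
        (∃ u : EuclideanSpace ℝ (Fin n),
          Metric.ball u (1 / r) ⊆ z +ᵥ convexHull ℝ (Set.range v) ∧
          z +ᵥ convexHull ℝ (Set.range v) ⊆ Metric.closedBall u r) := by
  have hlaminv : 0 < lam⁻¹ := inv_pos.mpr hlam
  refine ⟨ℓ * (lam + lam⁻¹ + 2), by nlinarith, ?_⟩
  intro γ μ A B CA CB v z hv hv0 h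
  have vadd_sub : ∀ C : Set (EuclideanSpace ℝ (Fin n)),
      convexHull ℝ (Set.range v) ⊆ (-z) +ᵥ C → z +ᵥ convexHull ℝ (Set.range v) ⊆ C := by
    intro C hC x hx
    obtain ⟨y, hy, rfl⟩ := hx
    obtain ⟨c, hc, rfl⟩ := hC hy
    simpa using hc
  have hSCA := vadd_sub CA h.S_subset_CA
  have hSCB := vadd_sub CB h.S_subset_CB
  refine ⟨Set.subset_inter hSCA hSCB, ?_, ?_⟩
  · -- facets lie on the frontier
    have hli : LinearIndependent ℝ (fun j : {x : Fin (n+1) // x ≠ 0} => v j) := by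
      have h2 := (affineIndependent_iff_linearIndependent_vsub ℝ v 0).mp hv
      simpa [hv0] using h2
    have hcard : Fintype.card {x : Fin (n+1) // x ≠ 0}
        = Module.finrank ℝ (EuclideanSpace ℝ (Fin n)) := by simp
    intro i hi
    haveI : Nonempty {x : Fin (n+1) // x ≠ 0} := ⟨⟨i, hi⟩⟩
    let b := basisOfLinearIndependentOfCardEqFinrank hli hcard
    have hbv : ∀ (j : {x : Fin (n+1) // x ≠ 0}), b j = v j := fun j => by
      simp [b, coe_basisOfLinearIndependentOfCardEqFinrank]
    set f := b.coord ⟨i, hi⟩ with hf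
    have h1 : f (v i) = 1 := by
      rw [← hbv ⟨i, hi⟩]; simp [f, Module.Basis.coord_apply, Module.Basis.repr_self]
    have h0 : ∀ j, j ≠ i → f (v j) = 0 := by
      intro j hji
      rcases eq_or_ne j 0 with rfl | hj
      · rw [hv0]; exact map_zero f
      · rw [← hbv ⟨j, hj⟩]
        simp [f, Module.Basis.coord_apply, Module.Basis.repr_self, Finsupp.single_apply,
          Subtype.ext_iff, hji]
    have hnn : ∀ x ∈ convexHull ℝ (Set.range v), 0 ≤ f x := by
      intro x hx
      refine convexHull_min ?_ (convex_halfSpace_ge f.isLinear 0) hx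
      rintro _ ⟨j, rfl⟩
      show (0:ℝ) ≤ f (v j)
      rcases eq_or_ne j i with rfl | hji
      · rw [h1]; norm_num
      · rw [h0 j hji]
    have hnnl : ∀ x ∈ lam • convexHull ℝ (Set.range v), 0 ≤ f x := by
      rintro _ ⟨s, hs, rfl⟩
      show (0:ℝ) ≤ f (lam • s)
      rw [_root_.map_smul, smul_eq_mul]
      exact mul_nonneg hlam.le (hnn s hs)
    have hzero : ∀ x ∈ convexHull ℝ (v '' ({i}ᶜ : Set (Fin (n+1)))), f x = 0 := by
      intro x hx
      refine convexHull_min ?_ (convex_hyperplane f.isLinear 0) hx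
      rintro _ ⟨j, hj, rfl⟩
      exact h0 j hj
    have hsub : convexHull ℝ (v '' ({i}ᶜ : Set (Fin (n+1)))) ⊆ convexHull ℝ (Set.range v) :=
      convexHull_mono (Set.image_subset_range v _)
    have key : ∀ C : Set (EuclideanSpace ℝ (Fin n)),
        convexHull ℝ (Set.range v) ⊆ (-z) +ᵥ C →
        ((-z) +ᵥ C ⊆ lam • convexHull ℝ (Set.range v)) →
        z +ᵥ convexHull ℝ (v '' ({i}ᶜ : Set (Fin (n+1)))) ⊆ frontier C := by
      intro C hC1 hC2 x hx
      obtain ⟨y, hy, rfl⟩ := hx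
      have hyS : y ∈ convexHull ℝ (Set.range v) := hsub hy
      have hmem : z +ᵥ y ∈ C := vadd_sub C hC1 ⟨y, hyS, rfl⟩
      rw [← closure_diff_interior]
      refine ⟨subset_closure hmem, fun hint => ?_⟩
      obtain ⟨ε, hε, hball⟩ := Metric.isOpen_iff.mp isOpen_interior _ hint
      have hvine : v i ≠ 0 := by rw [← hbv ⟨i, hi⟩]; exact b.ne_zero _
      have hni : 0 < ‖v i‖ := norm_pos_iff.mpr hvine
      set t := ε / (2 * ‖v i‖) with ht
      have htpos : 0 < t := div_pos hε (by positivity)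
      have hp : (z +ᵥ y) - t • v i ∈ C := by
        apply interior_subset
        apply hball
        rw [Metric.mem_ball, dist_eq_norm]
        have he : (z +ᵥ y) - t • v i - (z +ᵥ y) = -(t • v i) := by abel
        rw [he, norm_neg, norm_smul, Real.norm_eq_abs, abs_of_pos htpos]
        rw [ht, div_mul_eq_mul_div]
        rw [div_lt_iff₀ (by positivity)]
        nlinarith
      have hp2 : y - t • v i ∈ lam • convexHull ℝ (Set.range v) := by
        apply hC2
        refine ⟨(z +ᵥ y) - t • v i, hp, ?_⟩
        show -z + (z + y - t • v i) = y - t • v i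
        abel
      have hle := hnnl _ hp2
      rw [map_sub, _root_.map_smul, smul_eq_mul, hzero y hy, h1] at hle
      linarith
    intro x hx
    exact ⟨key CA h.S_subset_CA h.CA_subset_S hx, key CB h.S_subset_CB h.CB_subset_S hx⟩
  · -- the balls
    refine ⟨(1 - lam⁻¹) • z, ?_, ?_⟩
    · intro x hx
      rw [Metric.mem_ball, dist_eq_norm] at hx
      have hw : lam • (x - z) ∈ lam • convexHull ℝ (Set.range v) := by
        apply h.CA_subset_S
        refine ⟨z + lam • (x - z), ?_, ?_⟩
        · apply h.ball_subset_CA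
          rw [Metric.mem_ball, dist_zero_right]
          have heq : z + lam • (x - z) = lam • (x - (1 - lam⁻¹) • z) := by
            rw [smul_sub, smul_sub, smul_smul, mul_sub, mul_one, mul_inv_cancel₀ hlam.ne',
              sub_smul, one_smul]
            abel
          rw [heq, norm_smul, Real.norm_eq_abs, abs_of_pos hlam]
          have hle : lam * ‖x - (1 - lam⁻¹) • z‖ < lam * (1 / (ℓ * (lam + lam⁻¹ + 2))) :=
            by exact mul_lt_mul_of_pos_left hx hlam
          refine hle.trans_le ?_
          rw [mul_one_div, div_le_div_iff₀ (by positivity) hℓ, one_mul]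
          nlinarith
        · show -z + (z + lam • (x - z)) = lam • (x - z)
          abel
      have hxz : x - z ∈ convexHull ℝ (Set.range v) :=
        (Set.smul_mem_smul_set_iff₀ hlam.ne' _ _).mp hw
      exact ⟨x - z, hxz, by show z + (x - z) = x; abel⟩
    · intro x hx
      have hxCA : x ∈ CA := hSCA hx
      have hxn : ‖x‖ < ℓ := by simpa using h.CA_subset_ball hxCA
      have hz : z ∈ CA := hSCA ⟨0, subset_convexHull ℝ _ ⟨0, hv0⟩, by simp⟩
      have hzn : ‖z‖ < ℓ := by simpa using h.CA_subset_ball hz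
      rw [Metric.mem_closedBall, dist_eq_norm]
      have habs : |1 - lam⁻¹| ≤ 1 + lam⁻¹ := by
        rw [abs_le]; constructor <;> nlinarith
      calc ‖x - (1 - lam⁻¹) • z‖ ≤ ‖x‖ + ‖(1 - lam⁻¹) • z‖ := norm_sub_le _ _
        _ = ‖x‖ + |1 - lam⁻¹| * ‖z‖ := by rw [norm_smul, Real.norm_eq_abs]
        _ ≤ ℓ * (lam + lam⁻¹ + 2) := by nlinarith [abs_nonneg (1 - lam⁻¹), norm_nonneg z]


end
end

section
/- For every n ∈ ℕ, r ≥ 1 and σ ∈ (0,1], there exists k = k_{n,r,σ} > 0 such that the following holds. Let H ⊆ ℝ^n be a hyperplane with associated closed half-spaces H⁺ and H⁻, let w ∈ H with |w| ≤ r, and let f be the unit normal vector of H pointing into H⁺. Let y₁, y₂ ∈ ℝ^n be nonzero vectors with ⟨y₁, f⟩ ≥ 0 and ⟨y₂, f⟩ ≥ σ|y₂|. Then the Euclidean ball X = B(w + f/(2r), k) satisfies: (1) X ⊆ (1 − 1/(8r²))·(B(w, 1/r) ∩ H⁺) (dilation about the origin); (2) the set {x ∈ X : ⟨y₁, x−w⟩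 ≥ 0} has Lebesgue measure at least |X|/2; (3) every x ∈ X satisfies ⟨y₂, x−w⟩ ≥ (σ/4)·|y₂|·|x−w|; (4) every x ∈ X satisfies |x−w| ≥ 1/(4r). -/
open MeasureTheory Pointwise
open scoped RealInnerProductSpace

set_option maxHeartbeats 1000000 in
/-- **Lemma 3.9.**  Given a hyperplane `H = {x | ⟪f,x⟫ = c}` with unit normal `f` pointing into
`H⁺ = {x | c ≤ ⟪f,x⟫}`, a point `w ∈ H` with `|w| ≤ r`, and vectors `y₁, y₂` with
`⟪y₁,f⟫ ≥ 0` and `⟪y₂,f⟫ ≥ σ|y₂|`, the ball `X = B(w + f/(2r), k)` satisfies properties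
(1)–(4). -/
theorem lem_conelike_final (n : ℕ) (r σ : ℝ) (hr : 1 ≤ r) (hσ : 0 < σ) (hσ' : σ ≤ 1) :
    ∃ k : ℝ, 0 < k ∧
      ∀ (f w y₁ y₂ : EuclideanSpace ℝ (Fin n)) (c : ℝ),
        ‖f‖ = 1 → ⟪f, w⟫ = c → ‖w‖ ≤ r →
        y₁ ≠ 0 → y₂ ≠ 0 →
        0 ≤ ⟪y₁, f⟫ → σ * ‖y₂‖ ≤ ⟪y₂, f⟫ →
        (Metric.closedBall (w + (2 * r)⁻¹ • f) k
            ⊆ (1 - 1 / (8 * r ^ 2)) • (Metric.closedBall w (1 / r) ∩ {x | c ≤ ⟪f, x⟫})) ∧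
        (volume (Metric.closedBall (w + (2 * r)⁻¹ • f) k) / 2
            ≤ volume {x ∈ Metric.closedBall (w + (2 * r)⁻¹ • f) k | 0 ≤ ⟪y₁, x - w⟫}) ∧
        (∀ x ∈ Metric.closedBall (w + (2 * r)⁻¹ • f) k,
            σ / 4 * ‖y₂‖ * ‖x - w‖ ≤ ⟪y₂, x - w⟫) ∧
        (∀ x ∈ Metric.closedBall (w + (2 * r)⁻¹ • f) k, 1 / (4 * r) ≤ ‖x - w‖) := by
  have hr0 : (0:ℝ) < r := lt_of_lt_of_le one_pos hr
  refine ⟨σ / (8 * r), by positivity, ?_⟩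
  intro f w y₁ y₂ c hf hfw hwr hy₁ hy₂ hy₁f hy₂f
  set k : ℝ := σ / (8 * r) with hk
  set m : EuclideanSpace ℝ (Fin n) := w + (2 * r)⁻¹ • f with hm
  have hk0 : 0 < k := by positivity
  clear_value k m
  have hmw : m - w = (2 * r)⁻¹ • f := by rw [hm]; abel
  have hnmw : ‖m - w‖ = (2 * r)⁻¹ := by
    rw [hmw, norm_smul, hf, Real.norm_eq_abs, abs_of_pos (by positivity), mul_one]
  have hxm : ∀ x ∈ Metric.closedBall m k, ‖x - m‖ ≤ k := by
    intro x hx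
    rwa [Metric.mem_closedBall, dist_eq_norm] at hx
  have hxw_ub : ∀ x ∈ Metric.closedBall m k, ‖x - w‖ ≤ (2 * r)⁻¹ + k := by
    intro x hx
    have h0 : x - w = (x - m) + (m - w) := by abel
    rw [h0]
    calc ‖(x - m) + (m - w)‖ ≤ ‖x - m‖ + ‖m - w‖ := norm_add_le _ _
      _ ≤ k + (2 * r)⁻¹ := by rw [hnmw]; linarith [hxm x hx]
      _ = (2 * r)⁻¹ + k := by ring
  have hxw_lb : ∀ x ∈ Metric.closedBall m k, (2 * r)⁻¹ - k ≤ ‖x - w‖ := by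
    intro x hx
    have h1 : ‖m - w‖ - ‖x - m‖ ≤ ‖x - w‖ := by
      have h0 : (m - w) = (m - x) + (x - w) := by abel
      have h2 := norm_add_le (m - x) (x - w)
      rw [← h0] at h2
      have h3 : ‖m - x‖ = ‖x - m‖ := norm_sub_rev _ _
      linarith
    rw [hnmw] at h1
    linarith [hxm x hx]
  have hinner_xm : ∀ (y : EuclideanSpace ℝ (Fin n)), ∀ x ∈ Metric.closedBall m k,
      -(‖y‖ * k) ≤ ⟪y, x - m⟫ := by
    intro y x hx
    have h1 := abs_real_inner_le_norm y (x - m)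
    have h2 : ‖y‖ * ‖x - m‖ ≤ ‖y‖ * k :=
      mul_le_mul_of_nonneg_left (hxm x hx) (norm_nonneg _)
    have := neg_abs_le ⟪y, x - m⟫
    linarith
  have hinner_split : ∀ (y : EuclideanSpace ℝ (Fin n)), ∀ x : EuclideanSpace ℝ (Fin n),
      ⟪y, x - w⟫ = ⟪y, x - m⟫ + (2 * r)⁻¹ * ⟪y, f⟫ := by
    intro y x
    have h0 : x - w = (x - m) + (2 * r)⁻¹ • f := by rw [← hmw]; abel
    rw [h0, inner_add_right, real_inner_smul_right]
  refine ⟨?_, ?_, ?_, ?_⟩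
  · -- Property (1)
    intro x hx
    set lam : ℝ := 1 - 1 / (8 * r ^ 2) with hlam
    have hr2 : (1:ℝ) ≤ r ^ 2 := by nlinarith
    have hlam0 : 0 < lam := by
      rw [hlam]
      have h0 : 1 / (8 * r ^ 2) ≤ 1 / 8 := by
        apply div_le_div_of_nonneg_left (by norm_num) (by norm_num)
        linarith
      linarith
    clear_value lam
    refine ⟨lam⁻¹ • x, ⟨?_, ?_⟩,
      show lam • (lam⁻¹ • x) = x from smul_inv_smul₀ (ne_of_gt hlam0) x⟩
    · -- norm bound
      rw [Metric.mem_closedBall, dist_eq_norm]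
      have key : lam • (lam⁻¹ • x - w) = (x - w) + (1 - lam) • w := by
        rw [smul_sub, smul_inv_smul₀ (ne_of_gt hlam0)]
        module
      have hlam1 : lam < 1 := by
        rw [hlam]; have : 0 < 1 / (8 * r ^ 2) := by positivity
        linarith
      have hnorm : lam * ‖lam⁻¹ • x - w‖ ≤ ‖x - w‖ + (1 - lam) * ‖w‖ := by
        have h1 : ‖lam • (lam⁻¹ • x - w)‖ = lam * ‖lam⁻¹ • x - w‖ := by
          rw [norm_smul, Real.norm_eq_abs, abs_of_pos hlam0]
        have h2 := norm_add_le (x - w) ((1 - lam) • w)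
        rw [← key] at h2
        have h3 : ‖(1 - lam) • w‖ = (1 - lam) * ‖w‖ := by
          rw [norm_smul, Real.norm_eq_abs, abs_of_pos (by linarith)]
        rw [h1, h3] at h2
        exact h2
      have hub := hxw_ub x hx
      have h4 : (1 - lam) * ‖w‖ ≤ (1 - lam) * r :=
        mul_le_mul_of_nonneg_left hwr (by linarith)
      have h5 : (2 * r)⁻¹ + k + (1 - lam) * r ≤ lam * (1 / r) := by
        rw [← sub_nonneg, hlam, hk]
        have heq : (1 - 1 / (8 * r ^ 2)) * (1 / r) -
            ((2 * r)⁻¹ + σ / (8 * r) + (1 - (1 - 1 / (8 * r ^ 2))) * r)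
            = ((3 - σ) * r ^ 2 - 1) / (8 * r ^ 3) := by
          field_simp
          ring
        rw [heq]
        apply div_nonneg _ (by positivity)
        nlinarith
      have h6 : lam * ‖lam⁻¹ • x - w‖ ≤ lam * (1 / r) := by linarith
      exact le_of_mul_le_mul_left h6 hlam0
    · -- halfspace bound
      show c ≤ ⟪f, lam⁻¹ • x⟫
      rw [real_inner_smul_right]
      have hcr : |c| ≤ r := by
        rw [← hfw]
        calc |⟪f, w⟫| ≤ ‖f‖ * ‖w‖ := abs_real_inner_le_norm _ _
          _ = ‖w‖ := by rw [hf, one_mul]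
          _ ≤ r := hwr
      have hfx : c + (2 * r)⁻¹ - k ≤ ⟪f, x⟫ := by
        have h1 : ⟪f, x⟫ = ⟪f, x - w⟫ + c := by
          rw [inner_sub_right, hfw]; ring
        rw [h1, hinner_split f x]
        have h2 := hinner_xm f x hx
        rw [hf, one_mul] at h2
        have h3 : ⟪f, f⟫ = (1:ℝ) := by
          rw [real_inner_self_eq_norm_sq, hf]; norm_num
        rw [h3, mul_one]
        linarith
      have hstep : lam * c ≤ c + (2 * r)⁻¹ - k := by
        have h4 : lam * c - c = -(1 / (8 * r ^ 2) * c) := by rw [hlam]; ring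
        have h5 : -(1 / (8 * r ^ 2) * c) ≤ 1 / (8 * r ^ 2) * r := by
          have h6 : -c ≤ |c| := neg_le_abs c
          have h7 : 1 / (8 * r ^ 2) * (-c) ≤ 1 / (8 * r ^ 2) * r := by
            apply mul_le_mul_of_nonneg_left _ (by positivity)
            linarith
          linarith [h7]
        have h8 : 1 / (8 * r ^ 2) * r + k ≤ (2 * r)⁻¹ := by
          rw [← sub_nonneg, hk]
          have heq : (2 * r)⁻¹ - (1 / (8 * r ^ 2) * r + σ / (8 * r))
              = (3 - σ) / (8 * r) := by
            field_simp
            ring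
          rw [heq]
          apply div_nonneg _ (by positivity)
          linarith
        linarith
      have hgoal : lam * c ≤ ⟪f, x⟫ := le_trans hstep hfx
      calc c = lam⁻¹ * (lam * c) := by field_simp
        _ ≤ lam⁻¹ * ⟪f, x⟫ := mul_le_mul_of_nonneg_left hgoal (by positivity)
  · -- Property (2)
    set X := Metric.closedBall m k with hX
    set A := {x ∈ X | 0 ≤ ⟪y₁, x - m⟫} with hA
    have hcont : Continuous fun x : EuclideanSpace ℝ (Fin n) => ⟪y₁, x - m⟫ :=
      Continuous.inner continuous_const (continuous_id.sub continuous_const)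
    have hAmeas : MeasurableSet A := by
      have hA' : A = X ∩ {x | 0 ≤ ⟪y₁, x - m⟫} := rfl
      rw [hA']
      exact measurableSet_closedBall.inter
        (isClosed_le continuous_const hcont).measurableSet
    have hAsub : A ⊆ {x ∈ X | 0 ≤ ⟪y₁, x - w⟫} := by
      rintro x ⟨hxX, hxi⟩
      refine ⟨hxX, ?_⟩
      rw [hinner_split]
      have : 0 ≤ (2 * r)⁻¹ * ⟪y₁, f⟫ := mul_nonneg (by positivity) hy₁f
      exact add_nonneg hxi this
    have hrefl : (fun x => (m + m) - x) ⁻¹' A ⊆ X := by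
      intro x hx
      obtain ⟨hx1, _⟩ := hx
      rw [hX, Metric.mem_closedBall, dist_eq_norm]
      rw [Metric.mem_closedBall, dist_eq_norm] at hx1
      have h0 : (m + m) - x - m = -(x - m) := by abel
      rw [h0, norm_neg] at hx1
      exact hx1
    have hcover : X ⊆ A ∪ (fun x => (m + m) - x) ⁻¹' A := by
      intro x hxX
      by_cases hcase : 0 ≤ ⟪y₁, x - m⟫
      · exact Or.inl ⟨hxX, hcase⟩
      · refine Or.inr ?_
        show (m + m) - x ∈ A
        have h0 : (m + m) - x - m = -(x - m) := by abel
        refine ⟨?_, ?_⟩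
        · rw [hX, Metric.mem_closedBall, dist_eq_norm, h0, norm_neg]
          exact hxm x hxX
        · show (0:ℝ) ≤ ⟪y₁, (m + m) - x - m⟫
          rw [h0, inner_neg_right]
          push_neg at hcase
          linarith
    have hpreim : volume ((fun x => (m + m) - x) ⁻¹' A) = volume A :=
      (Measure.measurePreserving_sub_left volume (m + m)).measure_preimage
        hAmeas.nullMeasurableSet
    have hvol : volume X ≤ 2 * volume A := by
      calc volume X ≤ volume (A ∪ (fun x => (m + m) - x) ⁻¹' A) := measure_mono hcover
        _ ≤ volume A + volume ((fun x => (m + m) - x) ⁻¹' A) := measure_union_le _ _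
        _ = 2 * volume A := by rw [hpreim, two_mul]
    calc volume X / 2 ≤ 2 * volume A / 2 := by
          exact ENNReal.div_le_div_right hvol 2
      _ = volume A := by
          rw [mul_comm, mul_div_assoc, ENNReal.div_self (by norm_num) (by norm_num), mul_one]
      _ ≤ volume {x ∈ X | 0 ≤ ⟪y₁, x - w⟫} := measure_mono hAsub
  · -- Property (3)
    intro x hx
    have h1 := hinner_split y₂ x
    have h2 := hinner_xm y₂ x hx
    have h3 : (2 * r)⁻¹ * (σ * ‖y₂‖) ≤ (2 * r)⁻¹ * ⟪y₂, f⟫ :=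
      mul_le_mul_of_nonneg_left hy₂f (by positivity)
    have h4 := hxw_ub x hx
    have hscal : σ / 4 * ((2 * r)⁻¹ + k) ≤ (2 * r)⁻¹ * σ - k := by
      rw [← sub_nonneg, hk]
      have heq : (2 * r)⁻¹ * σ - σ / (8 * r) - σ / 4 * ((2 * r)⁻¹ + σ / (8 * r))
          = σ * (8 - σ) / (32 * r) := by
        field_simp
        ring
      rw [heq]
      apply div_nonneg _ (by positivity)
      nlinarith
    have h5 : σ / 4 * ‖y₂‖ * ‖x - w‖ ≤ σ / 4 * ‖y₂‖ * ((2 * r)⁻¹ + k) :=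
      mul_le_mul_of_nonneg_left h4 (by positivity)
    have h6 := mul_le_mul_of_nonneg_left hscal (norm_nonneg y₂)
    rw [h1]
    nlinarith [norm_nonneg y₂]
  · -- Property (4)
    intro x hx
    have hlb := hxw_lb x hx
    have h9 : 1 / (4 * r) ≤ (2 * r)⁻¹ - k := by
      rw [← sub_nonneg, hk]
      have heq : (2 * r)⁻¹ - σ / (8 * r) - 1 / (4 * r) = (2 - σ) / (8 * r) := by
        field_simp
        ring
      rw [heq]
      apply div_nonneg _ (by positivity)
      linarith
    linarith
end

section
/- For every n ∈ ℕ and r > 1, the following holds. Let S' ⊆ ℝ^n be an n-dimensional simplex such that B(u, 1/r) ⊆ S' ⊆ B(u, r) for some u ∈ ℝ^n. Let F be a facet of S', let H be the supporting hyperplane of F, and let H⁺ and H⁻ be the two closed half-spaces determined by H, with S' ⊆ H⁺ and H⁻ disjoint from the interior of S'. Then there exists v ∈ F such that B(v, 1/r) ∩ H⁺ ⊆ S' and B(v, 1/r) ∩ H ⊆ F ⊆ B(v, 2r) ∩ H. -/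
open scoped RealInnerProductSpace

/-- **Lemma 3.10.**  Let `S' = co{p₀,…,pₙ}` be an `n`-dimensional simplex with
`B(u,1/r) ⊆ S' ⊆ B(u,r)`, let `F = co{p_j : j ≠ i}` be a facet with supporting hyperplane
`H = {x | ⟪uv,x⟫ = c}`, half-spaces `H⁺ = {⟪uv,x⟫ ≤ c} ⊇ S'` and `H⁻ = {⟪uv,x⟫ ≥ c}`
disjoint from the interior of `S'`.  Then there exists `v ∈ F` with
`B(v,1/r) ∩ H⁺ ⊆ S'` and `B(v,1/r) ∩ H ⊆ F ⊆ B(v,2r) ∩ H`. -/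
theorem lem_conelike_one_half (n : ℕ) (r : ℝ) (hr : 1 < r)
    (p : Fin (n + 1) → EuclideanSpace ℝ (Fin n)) (u uv : EuclideanSpace ℝ (Fin n))
    (c : ℝ) (i : Fin (n + 1))
    (hp : AffineIndependent ℝ p)
    (hball : Metric.ball u (1 / r) ⊆ convexHull ℝ (Set.range p))
    (hball' : convexHull ℝ (Set.range p) ⊆ Metric.closedBall u r)
    (huv : uv ≠ 0)
    (hsupport : ∀ x ∈ convexHull ℝ (Set.range p), ⟪uv, x⟫ ≤ c)
    (hface : ∀ x ∈ convexHull ℝ (p '' ({i}ᶜ : Set (Fin (n + 1)))), ⟪uv, x⟫ = c)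
    (hdisj : Disjoint {x : EuclideanSpace ℝ (Fin n) | c ≤ ⟪uv, x⟫}
      (interior (convexHull ℝ (Set.range p)))) :
    ∃ v ∈ convexHull ℝ (p '' ({i}ᶜ : Set (Fin (n + 1)))),
      (Metric.ball v (1 / r) ∩ {x | ⟪uv, x⟫ ≤ c} ⊆ convexHull ℝ (Set.range p)) ∧
      (Metric.ball v (1 / r) ∩ {x | ⟪uv, x⟫ = c}
          ⊆ convexHull ℝ (p '' ({i}ᶜ : Set (Fin (n + 1))))) ∧
      convexHull ℝ (p '' ({i}ᶜ : Set (Fin (n + 1))))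
          ⊆ Metric.closedBall v (2 * r) ∩ {x | ⟪uv, x⟫ = c} := by
  classical
  have hrpos : (0 : ℝ) < r := lt_trans one_pos hr
  have hρ : (0 : ℝ) < 1 / r := by positivity
  -- the affine basis given by the simplex vertices
  have htop : affineSpan ℝ (Set.range p) = ⊤ := by
    rw [hp.affineSpan_eq_top_iff_card_eq_finrank_add_one]
    simp
  let b : AffineBasis (Fin (n + 1)) ℝ (EuclideanSpace ℝ (Fin n)) := ⟨p, hp, htop⟩
  have hch : convexHull ℝ (Set.range p) = { x | ∀ j, 0 ≤ b.coord j x } :=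
    b.convexHull_eq_nonneg_coord
  have hsum1 : ∀ x, ∑ j, b.coord j x = 1 := b.sum_coord_apply_eq_one
  have hrep : ∀ x, Finset.univ.affineCombination ℝ p (fun j => b.coord j x) = x :=
    b.affineCombination_coord_eq_self
  have hbp : ∀ j, b j = p j := fun _ => rfl
  have hcoord_pi : ∀ j, b.coord j (p i) = if j = i then 1 else 0 := by
    intro j
    rw [← hbp i, b.coord_apply]
  -- the supporting values at the vertices
  have hpc : ∀ j, j ≠ i → ⟪uv, p j⟫ = c := by
    intro j hj
    exact hface _ (subset_convexHull ℝ _ ⟨j, Set.mem_compl_singleton_iff.mpr hj, rfl⟩)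
  have hpi_le : ⟪uv, p i⟫ ≤ c := hsupport _ (subset_convexHull ℝ _ ⟨i, rfl⟩)
  -- the level of any point in terms of its `i`-th barycentric coordinate
  have hls : ∀ x : EuclideanSpace ℝ (Fin n),
      ⟪uv, x⟫ = ∑ j, b.coord j x * ⟪uv, p j⟫ := by
    intro x
    conv_lhs => rw [← hrep x,
      Finset.univ.affineCombination_eq_linear_combination p (fun j => b.coord j x) (hsum1 x)]
    rw [inner_sum]
    exact Finset.sum_congr rfl fun j _ => real_inner_smul_right uv (p j) _
  have hlevel : ∀ x : EuclideanSpace ℝ (Fin n),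
      ⟪uv, x⟫ = c - b.coord i x * (c - ⟪uv, p i⟫) := by
    intro x
    rw [hls x]
    have h1 : ∀ j, b.coord j x * ⟪uv, p j⟫
        = b.coord j x * c + (if j = i then b.coord j x * (⟪uv, p i⟫ - c) else 0) := by
      intro j
      by_cases hj : j = i
      · subst hj; simp only [eq_self_iff_true, if_true]; ring
      · simp [hj, hpc j hj]
    rw [Finset.sum_congr rfl fun j _ => h1 j, Finset.sum_add_distrib, ← Finset.sum_mul,
      hsum1, Finset.sum_ite_eq' Finset.univ i]
    simp only [Finset.mem_univ, if_true, one_mul]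
    ring
  -- the facet is not degenerate
  have hh_pos0 : 0 < c - ⟪uv, p i⟫ := by
    rcases lt_or_eq_of_le hpi_le with h | h
    · linarith
    · exfalso
      have hzero : ∀ x : EuclideanSpace ℝ (Fin n), ⟪uv, x⟫ = c := by
        intro x; rw [hlevel x, h]; ring
      have h0 := hzero 0
      have h1 := hzero uv
      rw [inner_zero_right] at h0
      rw [real_inner_self_eq_norm_sq] at h1
      have : ‖uv‖ = 0 := by nlinarith [norm_nonneg uv]
      exact huv (norm_eq_zero.mp this)
  obtain ⟨hh, hhdef⟩ : ∃ hh : ℝ, hh = c - ⟪uv, p i⟫ := ⟨_, rfl⟩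
  obtain ⟨d, hddef⟩ : ∃ d : ℝ, d = c - ⟪uv, u⟫ := ⟨_, rfl⟩
  have hh_pos : 0 < hh := hhdef ▸ hh_pos0
  have hhne : hh ≠ 0 := ne_of_gt hh_pos
  have hcoord_i : ∀ x : EuclideanSpace ℝ (Fin n),
      b.coord i x = (c - ⟪uv, x⟫) / hh := by
    intro x
    rw [eq_div_iff hhne, hhdef]
    linarith [hlevel x]
  have huv_pos : 0 < ‖uv‖ := norm_pos_iff.mpr huv
  obtain ⟨ε, hεdef⟩ : ∃ ε : ℝ, ε = 1 / (2 * r) / ‖uv‖ := ⟨_, rfl⟩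
  have hε_pos : 0 < ε := by rw [hεdef]; positivity
  have hεn : 0 < ε * ‖uv‖ ^ 2 := mul_pos hε_pos (pow_pos huv_pos 2)
  have hεuv : ‖ε • uv‖ = 1 / (2 * r) := by
    rw [norm_smul, Real.norm_eq_abs, abs_of_pos hε_pos, hεdef]
    field_simp
  have hhalflt : 1 / (2 * r) < 1 / r := by
    rw [div_lt_div_iff₀ (by positivity) hrpos]; nlinarith
  -- points u ± ε•uv lie in the ball, hence the simplex
  have hup : u + ε • uv ∈ convexHull ℝ (Set.range p) := by
    apply hball
    simp only [Metric.mem_ball, dist_eq_norm, add_sub_cancel_left]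
    rw [hεuv]; exact hhalflt
  have hum : u - ε • uv ∈ convexHull ℝ (Set.range p) := by
    apply hball
    simp only [Metric.mem_ball, dist_eq_norm, sub_sub_cancel_left, norm_neg]
    rw [hεuv]; exact hhalflt
  have hinner_up : ⟪uv, u + ε • uv⟫ = ⟪uv, u⟫ + ε * ‖uv‖ ^ 2 := by
    rw [inner_add_right, real_inner_smul_right, real_inner_self_eq_norm_sq]
  have hinner_um : ⟪uv, u - ε • uv⟫ = ⟪uv, u⟫ - ε * ‖uv‖ ^ 2 := by
    rw [inner_sub_right, real_inner_smul_right, real_inner_self_eq_norm_sq]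
  have hd_pos : 0 < d := by
    have hsup_up := hsupport _ hup
    rw [hinner_up] at hsup_up
    rw [hddef]
    linarith
  have hd_lt : d < hh := by
    have h2 : ∀ j, 0 ≤ b.coord j (u - ε • uv) := by
      rw [hch] at hum; exact hum
    have h1 : b.coord i (u - ε • uv) ≤ 1 :=
      calc b.coord i (u - ε • uv) ≤ ∑ j, b.coord j (u - ε • uv) :=
            Finset.single_le_sum (fun j _ => h2 j) (Finset.mem_univ i)
        _ = 1 := hsum1 _
    rw [hcoord_i, hinner_um, div_le_one hh_pos] at h1
    rw [hddef]
    linarith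
  have hhd_pos : 0 < hh - d := by linarith
  have hhdne : hh - d ≠ 0 := ne_of_gt hhd_pos
  obtain ⟨s, hsdef⟩ : ∃ s : ℝ, s = (hh - d) / hh := ⟨_, rfl⟩
  obtain ⟨t, htdef⟩ : ∃ t : ℝ, t = hh / (hh - d) := ⟨_, rfl⟩
  have hs_pos : 0 < s := by rw [hsdef]; exact div_pos hhd_pos hh_pos
  have hs_lt : s < 1 := by rw [hsdef, div_lt_one hh_pos]; linarith
  have hst : s * t = 1 := by rw [hsdef, htdef]; field_simp
  have ht_pos : 0 < t := by rw [htdef]; exact div_pos hh_pos hhd_pos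
  -- define v by the homothety from the apex p i mapping u onto H
  obtain ⟨v, hvdef⟩ : ∃ v : EuclideanSpace ℝ (Fin n),
      v = AffineMap.lineMap (p i) u t := ⟨_, rfl⟩
  have hcoordv : ∀ j, b.coord j v = AffineMap.lineMap (b.coord j (p i)) (b.coord j u) t :=
    fun j => by rw [hvdef]; exact (b.coord j).apply_lineMap (p i) u t
  have hu_hull : u ∈ convexHull ℝ (Set.range p) := hball (Metric.mem_ball_self hρ)
  have hu_coords : ∀ j, 0 ≤ b.coord j u := by rw [hch] at hu_hull; exact hu_hull
  have hdu : b.coord i u = d / hh := by rw [hcoord_i u, ← hddef]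
  have hcoordv_i : b.coord i v = 0 := by
    rw [hcoordv i, hcoord_pi i, if_pos rfl, hdu, AffineMap.lineMap_apply_module, htdef]
    simp only [smul_eq_mul]
    field_simp
    ring
  have hcoordv_ne : ∀ j, j ≠ i → b.coord j v = t * b.coord j u := by
    intro j hj
    rw [hcoordv j, hcoord_pi j, if_neg hj, AffineMap.lineMap_apply_module]
    simp only [smul_eq_mul]
    ring
  have hcoordv_nonneg : ∀ j, 0 ≤ b.coord j v := by
    intro j
    by_cases hj : j = i
    · rw [hj, hcoordv_i]
    · rw [hcoordv_ne j hj]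
      exact mul_nonneg ht_pos.le (hu_coords j)
  -- membership in the facet from coordinates
  have hmemF : ∀ x : EuclideanSpace ℝ (Fin n), (∀ j, 0 ≤ b.coord j x) → b.coord i x = 0 →
      x ∈ convexHull ℝ (p '' ({i}ᶜ : Set (Fin (n + 1)))) := by
    intro x hx0 hxi
    have hind : Set.indicator ↑(({i}ᶜ : Finset (Fin (n + 1)))) (fun j => b.coord j x)
        = fun j => b.coord j x := by
      funext j
      by_cases hj : j = i
      · subst hj; simp [Set.indicator, hxi]
      · simp [Set.indicator, hj]
    have hsumc : ∑ j ∈ ({i}ᶜ : Finset (Fin (n + 1))), b.coord j x = 1 := by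
      have hcs := Finset.sum_compl_add_sum ({i} : Finset (Fin (n + 1)))
        (fun j => b.coord j x)
      rw [Finset.sum_singleton, hxi, add_zero] at hcs
      rw [hcs]; exact hsum1 x
    have hxc : (({i}ᶜ : Finset (Fin (n + 1)))).affineCombination ℝ p (fun j => b.coord j x)
        = x := by
      rw [Finset.affineCombination_indicator_subset (fun j => b.coord j x) p
        (Finset.subset_univ ({i}ᶜ : Finset (Fin (n + 1)))), hind, hrep x]
    rw [← hxc, affineCombination_eq_centerMass hsumc]
    apply Finset.centerMass_mem_convexHull
    · intro j _; exact hx0 j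
    · rw [hsumc]; exact one_pos
    · intro j hj
      refine ⟨j, ?_, rfl⟩
      simpa using hj
  have hv_F : v ∈ convexHull ℝ (p '' ({i}ᶜ : Set (Fin (n + 1)))) :=
    hmemF v hcoordv_nonneg hcoordv_i
  -- the key contraction: coordinates of points near v
  have hkey : ∀ x : EuclideanSpace ℝ (Fin n), dist x v < 1 / r →
      ∀ j, j ≠ i → 0 ≤ b.coord j x := by
    intro x hx j hj
    obtain ⟨y, hydef⟩ : ∃ y : EuclideanSpace ℝ (Fin n),
        y = AffineMap.lineMap (p i) x s := ⟨_, rfl⟩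
    have hu_eq : (AffineMap.lineMap (p i) v s : EuclideanSpace ℝ (Fin n)) = u := by
      rw [AffineMap.lineMap_apply_module']
      have hvp : v - p i = t • (u - p i) := by
        rw [hvdef, AffineMap.lineMap_apply_module', add_sub_cancel_right]
      rw [hvp, smul_smul, hst, one_smul]
      abel
    have hyu : y - u = s • (x - v) := by
      rw [← hu_eq, hydef, AffineMap.lineMap_apply_module', AffineMap.lineMap_apply_module',
        smul_sub, smul_sub, smul_sub]
      abel
    have hdisty : dist y u < 1 / r := by
      rw [dist_eq_norm, hyu, norm_smul, Real.norm_eq_abs, abs_of_pos hs_pos]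
      calc s * ‖x - v‖ < s * (1 / r) := by
            apply mul_lt_mul_of_pos_left _ hs_pos
            rw [← dist_eq_norm]; exact hx
        _ ≤ 1 * (1 / r) := mul_le_mul_of_nonneg_right hs_lt.le hρ.le
        _ = 1 / r := one_mul _
    have hy_hull : y ∈ convexHull ℝ (Set.range p) := hball (Metric.mem_ball.mpr hdisty)
    have hy_coords : ∀ k, 0 ≤ b.coord k y := by rw [hch] at hy_hull; exact hy_hull
    have hcy : b.coord j y = s * b.coord j x := by
      rw [hydef, (b.coord j).apply_lineMap (p i) x s, hcoord_pi j, if_neg hj,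
        AffineMap.lineMap_apply_module]
      simp only [smul_eq_mul]
      ring
    have h0 : 0 ≤ s * b.coord j x := by rw [← hcy]; exact hy_coords j
    exact (mul_nonneg_iff_of_pos_left hs_pos).mp h0
  refine ⟨v, hv_F, ?_, ?_, ?_⟩
  · -- B(v,1/r) ∩ H⁺ ⊆ S'
    rintro x ⟨hx1, hx2⟩
    rw [Metric.mem_ball] at hx1
    rw [hch]
    intro j
    by_cases hj : j = i
    · rw [hj, hcoord_i]
      exact div_nonneg (by simpa using hx2) hh_pos.le
    · exact hkey x hx1 j hj
  · -- B(v,1/r) ∩ H ⊆ F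
    rintro x ⟨hx1, hx2⟩
    rw [Metric.mem_ball] at hx1
    have hx2' : ⟪uv, x⟫ = c := hx2
    apply hmemF
    · intro j
      by_cases hj : j = i
      · rw [hj, hcoord_i, hx2']; simp
      · exact hkey x hx1 j hj
    · rw [hcoord_i, hx2']; simp
  · -- F ⊆ B(v,2r) ∩ H
    intro f hf
    have hf_hull : f ∈ convexHull ℝ (Set.range p) :=
      convexHull_mono (Set.image_subset_range p _) hf
    have hv_hull : v ∈ convexHull ℝ (Set.range p) :=
      convexHull_mono (Set.image_subset_range p _) hv_F
    have h1 : dist f u ≤ r := hball' hf_hull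
    have h2 : dist v u ≤ r := hball' hv_hull
    constructor
    · rw [Metric.mem_closedBall]
      calc dist f v ≤ dist f u + dist u v := dist_triangle f u v
        _ ≤ r + r := add_le_add h1 (by rwa [dist_comm])
        _ = 2 * r := by ring
    · exact hface f hf
end

section
/- For every n ∈ ℕ and r > 0, there exists σ = σ_{n,r} > 0 such that the following holds. Let S' ⊆ ℝ^n be an n-dimensional simplex such that B(u, 1/r) ⊆ S' ⊆ B(u, r) for some u ∈ ℝ^n, and let f₀, f₁, …, f_n be the unit inward normal vectors to the n+1 facets of S' (in any order). Then for every unit vector v ∈ ℝ^n there exists an index i with 1 ≤ i ≤ n such that |⟨f_i, v⟩| ≥ σ. -/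
open scoped RealInnerProductSpace

/-- **Lemma 3.11.**  Let `S' = co{p₀,…,pₙ}` be an `n`-dimensional simplex with
`B(u,1/r) ⊆ S' ⊆ B(u,r)` and let `f₀,…,fₙ` be the unit inward normals of its `n+1` facets
(in any order, encoded by a permutation `e`; `f i` is the inward normal of the facet opposite
the vertex `p (e i)`).  Then there is `σ = σ_{n,r} > 0` such that every unit vector `v`
satisfies `|⟪f_i, v⟫| ≥ σ` for some `1 ≤ i ≤ n`. -/
theorem lem_conelike_3 (n : ℕ) (r : ℝ) (hr : 0 < r) :
    ∃ σ : ℝ, 0 < σ ∧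
      ∀ (p : Fin (n + 1) → EuclideanSpace ℝ (Fin n)) (u : EuclideanSpace ℝ (Fin n))
        (f : Fin (n + 1) → EuclideanSpace ℝ (Fin n)) (e : Fin (n + 1) ≃ Fin (n + 1)),
        AffineIndependent ℝ p →
        Metric.ball u (1 / r) ⊆ convexHull ℝ (Set.range p) →
        convexHull ℝ (Set.range p) ⊆ Metric.closedBall u r →
        (∀ i : Fin (n + 1), ‖f i‖ = 1 ∧
          ∃ c : ℝ, (∀ j : Fin (n + 1), j ≠ e i → ⟪f i, p j⟫ = c) ∧ c < ⟪f i, p (e i)⟫) →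
        ∀ v : EuclideanSpace ℝ (Fin n), ‖v‖ = 1 →
          ∃ i : Fin (n + 1), i ≠ 0 ∧ σ ≤ |⟪f i, v⟫| := by
  refine ⟨1 / (4 * r ^ 2), by positivity, ?_⟩
  intro p u f e hind hball hcball hf v hv
  by_contra hcon
  push_neg at hcon
  -- choose constants
  choose c hc hclt using fun i => (hf i).2
  have hnorm : ∀ i, ‖f i‖ = 1 := fun i => (hf i).1
  -- each halfspace contains the simplex
  have hhalf : ∀ i, convexHull ℝ (Set.range p) ⊆ {x | c i ≤ ⟪f i, x⟫} := by
    intro i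
    apply convexHull_min
    · rintro _ ⟨j, rfl⟩
      by_cases hj : j = e i
      · subst hj; exact le_of_lt (hclt i)
      · exact le_of_eq (hc i j hj).symm
    · exact convex_halfSpace_ge ⟨fun x y => inner_add_right _ _ _,
        fun a x => real_inner_smul_right _ _ a⟩ (c i)
  -- u is deep inside each halfspace
  have hdeep : ∀ i, c i + 1 / (2 * r) ≤ ⟪f i, u⟫ := by
    intro i
    have hy : u - (1 / (2 * r)) • f i ∈ Metric.ball u (1 / r) := by
      rw [Metric.mem_ball, dist_eq_norm]
      have : u - (1 / (2 * r)) • f i - u = -((1 / (2 * r)) • f i) := by abel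
      rw [this, norm_neg, norm_smul, hnorm i, mul_one, Real.norm_eq_abs,
        abs_of_pos (by positivity)]
      rw [div_lt_div_iff₀ (by positivity) hr]
      nlinarith
    have := hhalf i (hball hy)
    simp only [Set.mem_setOf_eq, inner_sub_right, real_inner_smul_right] at this
    rw [real_inner_self_eq_norm_sq, hnorm i] at this
    nlinarith
  -- the shifted point
  set s : ℝ := if 0 ≤ ⟪f 0, v⟫ then 2 * r else -(2 * r) with hs
  have habs : |s| = 2 * r := by
    rw [hs]; split_ifs
    · rw [abs_of_pos (by positivity)]
    · rw [abs_neg, abs_of_pos (by positivity)]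
  have hs0 : 0 ≤ s * ⟪f 0, v⟫ := by
    rw [hs]; split_ifs with h
    · positivity
    · push_neg at h; nlinarith
  set x : EuclideanSpace ℝ (Fin n) := u + s • v with hx
  have hxinner : ∀ i, ⟪f i, x⟫ = ⟪f i, u⟫ + s * ⟪f i, v⟫ := by
    intro i; rw [hx, inner_add_right, real_inner_smul_right]
  -- x satisfies all halfspace constraints
  have hxhalf : ∀ i, c i ≤ ⟪f i, x⟫ := by
    intro i
    rw [hxinner i]
    by_cases hi : i = 0
    · subst hi; have := hdeep 0; have h2r : 0 < 1 / (2 * r) := by positivity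
      nlinarith
    · have hlt := hcon i hi
      have : s * ⟪f i, v⟫ ≥ -(1 / (2 * r)) := by
        have h1 : |s * ⟪f i, v⟫| ≤ 2 * r * (1 / (4 * r ^ 2)) := by
          rw [abs_mul, habs]
          have : |⟪f i, v⟫| ≤ 1 / (4 * r ^ 2) := le_of_lt hlt
          nlinarith [abs_nonneg ⟪f i, v⟫]
        have h2 : 2 * r * (1 / (4 * r ^ 2)) = 1 / (2 * r) := by
          field_simp; ring
        nlinarith [neg_abs_le (s * ⟪f i, v⟫)]
      have := hdeep i
      have h2r : 0 < 1 / (2 * r) := by positivity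
      linarith
  -- barycentric coordinates
  have htop : affineSpan ℝ (Set.range p) = ⊤ := by
    rw [hind.affineSpan_eq_top_iff_card_eq_finrank_add_one]
    simp [finrank_euclideanSpace]
  let b : AffineBasis (Fin (n + 1)) ℝ (EuclideanSpace ℝ (Fin n)) := ⟨p, hind, htop⟩
  have hsum : ∑ j, b.coord j x = 1 := b.sum_coord_apply_eq_one x
  have hrepr : x = Finset.univ.affineCombination ℝ p (fun j => b.coord j x) :=
    (b.affineCombination_coord_eq_self x).symm
  have hxeq : x = ∑ j, b.coord j x • p j := by
    conv_lhs => rw [hrepr]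
    rw [Finset.affineCombination_eq_linear_combination _ _ _ hsum]
  -- coordinates are nonnegative
  have hw : ∀ j, 0 ≤ b.coord j x := by
    intro j
    have hi := hxhalf (e.symm j)
    set i := e.symm j with hij
    have hej : e i = j := e.apply_symm_apply j
    have hinner : ⟪f i, x⟫ = c i * (1 - b.coord j x) + b.coord j x * ⟪f i, p j⟫ := by
      conv_lhs => rw [hxeq]
      rw [inner_sum]
      simp_rw [real_inner_smul_right]
      rw [← Finset.add_sum_erase _ _ (Finset.mem_univ j)]
      have hrest : ∑ k ∈ Finset.univ.erase j, b.coord k x * ⟪f i, p k⟫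
          = ∑ k ∈ Finset.univ.erase j, b.coord k x * c i := by
        apply Finset.sum_congr rfl
        intro k hk
        rw [hc i k (by rw [hej]; exact (Finset.mem_erase.mp hk).1)]
      rw [hrest, ← Finset.sum_mul]
      have : ∑ k ∈ Finset.univ.erase j, b.coord k x = 1 - b.coord j x := by
        have := Finset.add_sum_erase Finset.univ (fun k => b.coord k x) (Finset.mem_univ j)
        linarith [hsum]
      rw [this]; ring
    rw [hinner] at hi
    have hd : c i < ⟪f i, p j⟫ := by rw [← hej]; exact hclt i
    nlinarith
  -- so x ∈ simplex ⊆ closed ball, contradiction with dist = 2r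
  have hxmem : x ∈ convexHull ℝ (Set.range p) := by
    rw [hxeq, ← Finset.affineCombination_eq_linear_combination _ _ _ hsum]
    exact affineCombination_mem_convexHull (fun j _ => hw j) hsum
  have hxdist : dist x u ≤ r := Metric.mem_closedBall.mp (hcball hxmem)
  have : dist x u = 2 * r := by
    rw [hx, dist_eq_norm]
    have : u + s • v - u = s • v := by abel
    rw [this, norm_smul, hv, mul_one, Real.norm_eq_abs, habs]
  linarith
end

section
/- For every n ∈ ℕ there exists a constant c_n > 0 such that the following holds. If 0 < t ≤ 1/2 and λ₁, …, λ_n > 0 satisfy λ₁·λ₂⋯λ_n = 1, then √(Σ_{i=1}^n (λ_i − 1)²) ≤ c_n · t^{−n} · (Π_{i=1}^n (t + (1−t)λ_i) − 1) + c_n · t^{−1/2} · √(Π_{i=1}^n (t + (1−t)λ_i) − 1). -/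
private lemma one_add_sum_le_prod' {ι : Type*} (s : Finset ι) (x : ι → ℝ)
    (hx : ∀ i ∈ s, 0 ≤ x i) :
    1 + ∑ i ∈ s, x i ≤ ∏ i ∈ s, (1 + x i) := by
  induction s using Finset.cons_induction with
  | empty => simp
  | cons i s hi ih =>
    rw [Finset.prod_cons, Finset.sum_cons]
    have hx0 := hx i (Finset.mem_cons_self i s)
    have ihs := ih (fun j hj => hx j (Finset.mem_cons_of_mem hj))
    have hsum : 0 ≤ ∑ j ∈ s, x j :=
      Finset.sum_nonneg (fun j hj => hx j (Finset.mem_cons_of_mem hj))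
    nlinarith [mul_le_mul_of_nonneg_left ihs (show (0:ℝ) ≤ 1 + x i by linarith),
      mul_nonneg hx0 hsum]

private lemma sqrt_le_of_sq' {X Y : ℝ} (hY : 0 ≤ Y) (h : X ≤ Y ^ 2) :
    Real.sqrt X ≤ Y := by
  calc Real.sqrt X ≤ Real.sqrt (Y ^ 2) := Real.sqrt_le_sqrt h
    _ = Y := Real.sqrt_sq hY

set_option maxHeartbeats 4000000 in
/-- **Lemma 3.7 (eigenvalue inequality).**  For every `n` there is `c_n > 0` such that for all
`t ∈ (0,1/2]` and `λ₁,…,λₙ > 0` with `λ₁⋯λₙ = 1`,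
`√(Σ (λᵢ-1)²) ≤ cₙ t⁻ⁿ (Π(t+(1-t)λᵢ) - 1) + cₙ t^(-1/2) √(Π(t+(1-t)λᵢ) - 1)`. -/
theorem lambda_bound (n : ℕ) :
    ∃ c : ℝ, 0 < c ∧
      ∀ (t : ℝ) (lam : Fin n → ℝ),
        0 < t → t ≤ 1 / 2 →
        (∀ i, 0 < lam i) → (∏ i, lam i) = 1 →
        Real.sqrt (∑ i, (lam i - 1) ^ 2)
          ≤ c * t ^ (-(n : ℝ)) * ((∏ i, (t + (1 - t) * lam i)) - 1)
            + c * t ^ (-(1 : ℝ) / 2) * Real.sqrt ((∏ i, (t + (1 - t) * lam i)) - 1) := by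
  classical
  refine ⟨100 * ((n : ℝ) + 1), by positivity, ?_⟩
  intro t lam ht ht2 hpos hprod
  have ht1 : t ≤ 1 := by linarith
  have hnn : (0:ℝ) ≤ (n : ℝ) := Nat.cast_nonneg n
  rcases Nat.eq_zero_or_pos n with rfl | hn
  · norm_num [Finset.univ_eq_empty]
  -- notation
  set P : ℝ := ∏ i, (t + (1 - t) * lam i) with hPdef
  clear_value P
  have htn : t ^ (-(n : ℝ)) = (t ^ n)⁻¹ := by
    rw [Real.rpow_neg ht.le, Real.rpow_natCast]
  have hth : t ^ (-(1 : ℝ) / 2) = (Real.sqrt t)⁻¹ := by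
    rw [neg_div, Real.rpow_neg ht.le, ← Real.sqrt_eq_rpow]
  rw [htn, hth]
  have htnpos : 0 < t ^ n := pow_pos ht n
  set c : ℝ := 100 * ((n : ℝ) + 1) with hcdef
  have hc15 : (15:ℝ) ≤ c := by rw [hcdef]; nlinarith [hnn]
  have hcpos : (0:ℝ) < c := by rw [hcdef]; positivity
  clear_value c
  -- square roots of the lambdas
  set kap : Fin n → ℝ := fun i => Real.sqrt (lam i) with hkapdef
  have hkpos : ∀ i, 0 < kap i := fun i => Real.sqrt_pos.2 (hpos i)
  have hksq : ∀ i, kap i ^ 2 = lam i := fun i => Real.sq_sqrt (hpos i).le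
  have hkval : ∀ i, kap i = Real.sqrt (lam i) := fun i => rfl
  clear_value kap
  have hprodk : ∏ i, kap i = 1 := by
    have h2 : (∏ i, kap i) ^ 2 = 1 := by
      rw [← Finset.prod_pow]
      rw [Finset.prod_congr rfl (fun i _ => hksq i)]
      exact hprod
    have hp : 0 < ∏ i, kap i := Finset.prod_pos (fun i _ => hkpos i)
    have hfac : ((∏ i, kap i) - 1) * ((∏ i, kap i) + 1) = 0 := by linear_combination h2
    rcases mul_eq_zero.1 hfac with h | h
    · linarith
    · linarith
  -- AM-GM : 1 ≤ ∏ (t + (1-t) κᵢ)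
  have hAMk : (1:ℝ) ≤ ∏ i, (t + (1 - t) * kap i) := by
    have hfac : ∀ i, kap i ^ (1 - t) ≤ t + (1 - t) * kap i := by
      intro i
      have h := Real.geom_mean_le_arith_mean2_weighted ht.le
        (by linarith : (0:ℝ) ≤ 1 - t) zero_le_one (hkpos i).le (by ring)
      simpa using h
    calc (1:ℝ) = (∏ i, kap i) ^ (1 - t) := by rw [hprodk, Real.one_rpow]
      _ = ∏ i, kap i ^ (1 - t) :=
          (Real.finset_prod_rpow _ _ (fun i _ => (hkpos i).le) _).symm
      _ ≤ ∏ i, (t + (1 - t) * kap i) :=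
          Finset.prod_le_prod (fun i _ => Real.rpow_nonneg (hkpos i).le _)
            (fun i _ => hfac i)
  -- decomposition  t + (1-t) λ = a + b
  set a : Fin n → ℝ := fun i => (t + (1 - t) * kap i) ^ 2 with hadef
  set b : Fin n → ℝ := fun i => t * (1 - t) * (kap i - 1) ^ 2 with hbdef
  have hapos : ∀ i, 0 < a i := by
    intro i
    have h0 : 0 < t + (1 - t) * kap i := by nlinarith [(hkpos i).le]
    simp only [hadef]
    positivity
  have hbnn : ∀ i, 0 ≤ b i := by
    intro i
    have h1t : (0:ℝ) ≤ 1 - t := by linarith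
    simp only [hbdef]
    positivity
  have hab : ∀ i, a i + b i = t + (1 - t) * lam i := by
    intro i
    have h := hksq i
    simp only [hadef, hbdef]
    linear_combination (1 - t) * h
  have hprod_a : (1:ℝ) ≤ ∏ i, a i := by
    have e : ∏ i, a i = (∏ i, (t + (1 - t) * kap i)) ^ 2 := by
      simp only [hadef]
      rw [Finset.prod_pow]
    rw [e]
    nlinarith [hAMk]
  clear_value a b
  have hPsplit : P = ∏ i, (a i + b i) := by
    rw [hPdef]
    exact (Finset.prod_congr rfl (fun i _ => hab i)).symm
  -- superadditivity : P ≥ 1 + Σ bᵢ/aᵢ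
  have hQsum : 1 + ∑ i, b i / a i ≤ P := by
    have hxnn : ∀ i ∈ Finset.univ, (0:ℝ) ≤ b i / a i :=
      fun i _ => div_nonneg (hbnn i) (hapos i).le
    have h1 := one_add_sum_le_prod' Finset.univ (fun i => b i / a i) hxnn
    have key : ∏ i, (a i + b i) = (∏ i, a i) * ∏ i, (1 + b i / a i) := by
      rw [← Finset.prod_mul_distrib]
      refine Finset.prod_congr rfl (fun i _ => ?_)
      have hne := (hapos i).ne'
      field_simp
    have hprnn : (0:ℝ) ≤ ∏ i, (1 + b i / a i) :=
      Finset.prod_nonneg (fun i _ => by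
        have := hxnn i (Finset.mem_univ i); linarith)
    calc 1 + ∑ i, b i / a i ≤ ∏ i, (1 + b i / a i) := h1
      _ ≤ (∏ i, a i) * ∏ i, (1 + b i / a i) := le_mul_of_one_le_left hprnn hprod_a
      _ = ∏ i, (a i + b i) := key.symm
      _ = P := hPsplit.symm
  have hP1 : 1 ≤ P := by
    have hs : 0 ≤ ∑ i, b i / a i :=
      Finset.sum_nonneg (fun i _ => div_nonneg (hbnn i) (hapos i).le)
    linarith
  have hD0 : 0 ≤ P - 1 := by linarith
  -- the quantities q i
  set q : Fin n → ℝ := fun i => (kap i - 1) ^ 2 / (1 + lam i) with hqdef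
  have hqnn : ∀ i, 0 ≤ q i := by
    intro i
    have h0 := (hpos i).le
    simp only [hqdef]
    positivity
  clear_value q
  have hqb : ∀ i, t / 4 * q i ≤ b i / a i := by
    intro i
    have hl1 : (0:ℝ) < 1 + lam i := by linarith [hpos i]
    have ha_le : a i ≤ 4 * (1 - t) * (1 + lam i) := by
      simp only [hadef]
      have hk := (hkpos i).le
      have e1 : t + (1 - t) * kap i ≤ 1 + kap i := by nlinarith
      have e0 : 0 ≤ t + (1 - t) * kap i := by nlinarith
      have e2 : (t + (1 - t) * kap i) ^ 2 ≤ (1 + kap i) ^ 2 := by nlinarith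
      have e3 : (1 + kap i) ^ 2 ≤ 2 * (1 + kap i ^ 2) := by nlinarith [sq_nonneg (kap i - 1)]
      have e4 : 2 * (1 + kap i ^ 2) ≤ 4 * (1 - t) * (1 + kap i ^ 2) := by
        nlinarith [sq_nonneg (kap i), mul_nonneg (show (0:ℝ) ≤ 2 - 4 * t by linarith)
          (show (0:ℝ) ≤ 1 + kap i ^ 2 by positivity)]
      have e5 := hksq i
      nlinarith [e2, e3, e4]
    have heq : t / 4 * q i = b i / (4 * (1 - t) * (1 + lam i)) := by
      simp only [hqdef, hbdef]
      have h1t : (1:ℝ) - t ≠ 0 := by linarith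
      field_simp
    rw [heq]
    have h := one_div_le_one_div_of_le (hapos i) ha_le
    calc b i / (4 * (1 - t) * (1 + lam i))
        = b i * (1 / (4 * (1 - t) * (1 + lam i))) := by ring
      _ ≤ b i * (1 / a i) := mul_le_mul_of_nonneg_left h (hbnn i)
      _ = b i / a i := by ring
  have hF1 : t / 4 * ∑ i, q i ≤ P - 1 := by
    have hs : ∑ i, t / 4 * q i ≤ ∑ i, b i / a i :=
      Finset.sum_le_sum (fun i _ => hqb i)
    rw [← Finset.mul_sum] at hs
    linarith
  have hsumqnn : 0 ≤ ∑ i, q i := Finset.sum_nonneg (fun i _ => hqnn i)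
  -- cap : lam i * t^(n-1) ≤ 2 P
  set τ : ℝ := t ^ (n - 1) with hτdef
  have hτpos : 0 < τ := by rw [hτdef]; positivity
  have hτ1 : τ ≤ 1 := by rw [hτdef]; exact pow_le_one₀ ht.le ht1
  have hτt : t ^ n = τ * t := by
    rw [hτdef, ← pow_succ, Nat.sub_add_cancel hn]
  clear_value τ
  have hcap : ∀ i, lam i * τ ≤ 2 * P := by
    intro i
    have h1 : τ ≤ ∏ j ∈ Finset.univ.erase i, (t + (1 - t) * lam j) := by
      calc τ = t ^ (n - 1) := hτdef
        _ = ∏ _j ∈ Finset.univ.erase i, t := by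
            rw [Finset.prod_const, Finset.card_erase_of_mem (Finset.mem_univ i),
              Finset.card_univ, Fintype.card_fin]
        _ ≤ ∏ j ∈ Finset.univ.erase i, (t + (1 - t) * lam j) :=
            Finset.prod_le_prod (fun j _ => ht.le)
              (fun j _ => by nlinarith [hpos j])
    have h2 : (t + (1 - t) * lam i) * ∏ j ∈ Finset.univ.erase i,
        (t + (1 - t) * lam j) = P := by
      rw [hPdef]
      exact Finset.mul_prod_erase Finset.univ (fun j => t + (1 - t) * lam j)
        (Finset.mem_univ i)
    have h3 : lam i / 2 ≤ t + (1 - t) * lam i := by nlinarith [hpos i]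
    have h4 : lam i / 2 * τ ≤ (t + (1 - t) * lam i) *
        ∏ j ∈ Finset.univ.erase i, (t + (1 - t) * lam j) := by
      apply mul_le_mul h3 h1 hτpos.le
      nlinarith [hpos i]
    nlinarith [h4, h2]
  -- per-coordinate quadratic bound
  have hkey : ∀ i, (lam i - 1) ^ 2 ≤ 2 * (1 + lam i) ^ 2 * q i := by
    intro i
    have hl1 : (0:ℝ) < 1 + lam i := by linarith [hpos i]
    have h1 : q i * (1 + lam i) = (kap i - 1) ^ 2 := by
      simp only [hqdef]; field_simp
    nlinarith [h1, hksq i, sq_nonneg ((kap i - 1) ^ 2), sq_nonneg (kap i - 1),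
      sq_nonneg (kap i + 1), (hkpos i).le]
  have hSnn : 0 ≤ ∑ i, (lam i - 1) ^ 2 :=
    Finset.sum_nonneg (fun i _ => sq_nonneg _)
  -- nonnegativity of both right-hand terms
  have hterm1nn : 0 ≤ c * (t ^ n)⁻¹ * (P - 1) :=
    mul_nonneg (mul_nonneg hcpos.le (inv_nonneg.2 htnpos.le)) hD0
  have hterm2nn : 0 ≤ c * (Real.sqrt t)⁻¹ * Real.sqrt (P - 1) :=
    mul_nonneg (mul_nonneg hcpos.le (inv_nonneg.2 (Real.sqrt_nonneg t)))
      (Real.sqrt_nonneg _)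
  by_cases hcase1 : P - 1 < t / 32
  · -- all lambdas are at most 4 ; use the sqrt term
    have hlam4 : ∀ i, lam i ≤ 4 := by
      intro i
      by_contra hbig
      push_neg at hbig
      have hκ2 : 2 ≤ kap i := by
        have h4 : Real.sqrt 4 ≤ Real.sqrt (lam i) := Real.sqrt_le_sqrt (by linarith)
        have h2' : Real.sqrt 4 = 2 := by
          rw [show (4:ℝ) = 2 ^ 2 by norm_num, Real.sqrt_sq (by norm_num : (0:ℝ) ≤ 2)]
        rw [hkval i]
        linarith
      have hq8 : 1 / 8 ≤ q i := by
        simp only [hqdef]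
        rw [le_div_iff₀ (by linarith [hpos i] : (0:ℝ) < 1 + lam i)]
        nlinarith [hksq i, sq_nonneg (kap i - 2), hκ2]
      have hsingle : q i ≤ ∑ j, q j :=
        Finset.single_le_sum (fun j _ => hqnn j) (Finset.mem_univ i)
      nlinarith [hF1]
    have hsumbd : ∑ i, (lam i - 1) ^ 2 ≤ 50 * ∑ i, q i := by
      rw [Finset.mul_sum]
      refine Finset.sum_le_sum (fun i _ => ?_)
      have h5 : (1 + lam i) ^ 2 ≤ 25 := by nlinarith [hpos i, hlam4 i]
      nlinarith [hkey i, hqnn i]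
    have hmain : ∑ i, (lam i - 1) ^ 2 ≤ (15 * (Real.sqrt t)⁻¹ * Real.sqrt (P - 1)) ^ 2 := by
      have he : (15 * (Real.sqrt t)⁻¹ * Real.sqrt (P - 1)) ^ 2 = 225 * t⁻¹ * (P - 1) := by
        rw [mul_pow, mul_pow, ← Real.sqrt_inv, Real.sq_sqrt (inv_nonneg.2 ht.le),
          Real.sq_sqrt hD0]
        norm_num
      rw [he]
      have h' : (∑ i, (lam i - 1) ^ 2) * t ≤ 225 * (P - 1) := by
        nlinarith [mul_le_mul_of_nonneg_right hsumbd ht.le, hF1, hD0]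
      have h'' := mul_le_mul_of_nonneg_right h' (inv_nonneg.2 ht.le)
      rw [mul_assoc, mul_inv_cancel₀ ht.ne', mul_one] at h''
      nlinarith [h'']
    have hfin : Real.sqrt (∑ i, (lam i - 1) ^ 2)
        ≤ 15 * (Real.sqrt t)⁻¹ * Real.sqrt (P - 1) :=
      sqrt_le_of_sq' (by positivity) hmain
    have hstep : 15 * (Real.sqrt t)⁻¹ * Real.sqrt (P - 1)
        ≤ c * (Real.sqrt t)⁻¹ * Real.sqrt (P - 1) := by
      have h0 : 0 ≤ (Real.sqrt t)⁻¹ * Real.sqrt (P - 1) := by positivity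
      nlinarith [h0]
    linarith
  · push_neg at hcase1
    have h32 : t ≤ 32 * (P - 1) := by linarith
    by_cases hcase2 : P - 1 ≤ 1
    · -- middle regime, use the t^{-n} term
      have hP2 : P ≤ 2 := by linarith
      have hs1 : ∀ i, (lam i - 1) ^ 2 * τ ^ 2 ≤ 18 * P ^ 2 * q i := by
        intro i
        have h3P : (1 + lam i) * τ ≤ 3 * P := by nlinarith [hcap i, hτ1, hP1]
        have h3Pnn : 0 ≤ (1 + lam i) * τ :=
          mul_nonneg (by linarith [hpos i]) hτpos.le
        have h3P2 : ((1 + lam i) * τ) ^ 2 ≤ (3 * P) ^ 2 := by nlinarith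
        nlinarith [mul_le_mul_of_nonneg_right (hkey i) (sq_nonneg τ),
          mul_le_mul_of_nonneg_left h3P2 (by linarith [hqnn i] : (0:ℝ) ≤ 2 * q i),
          hqnn i]
      have hsum1 : (∑ i, (lam i - 1) ^ 2) * τ ^ 2 ≤ 18 * P ^ 2 * ∑ i, q i := by
        rw [Finset.sum_mul, Finset.mul_sum]
        exact Finset.sum_le_sum (fun i _ => hs1 i)
      have hchain : (∑ i, (lam i - 1) ^ 2) * τ ^ 2 * t ≤ 288 * (P - 1) := by
        have hqt : t * ∑ i, q i ≤ 4 * (P - 1) := by linarith [hF1]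
        have hP24 : P ^ 2 ≤ 4 := by nlinarith [hP1, hP2]
        have hx : 0 ≤ (P - 1) * (4 - P ^ 2) := mul_nonneg hD0 (by linarith)
        nlinarith [mul_le_mul_of_nonneg_right hsum1 ht.le,
          mul_le_mul_of_nonneg_left hqt (show (0:ℝ) ≤ 18 * P ^ 2 by positivity),
          hx, hD0]
      have hss : (∑ i, (lam i - 1) ^ 2) * (t ^ n) ^ 2 ≤ (c * (P - 1)) ^ 2 := by
        rw [hτt]
        have hc2 : 9216 * (P - 1) ^ 2 ≤ (c * (P - 1)) ^ 2 := by
          rw [hcdef]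
          nlinarith [sq_nonneg (P - 1), hnn,
            mul_nonneg (mul_nonneg hnn hnn) (sq_nonneg (P - 1)),
            mul_nonneg hnn (sq_nonneg (P - 1))]
        nlinarith [mul_le_mul_of_nonneg_right hchain ht.le,
          mul_le_mul_of_nonneg_left h32 (show (0:ℝ) ≤ 288 * (P - 1) by linarith),
          hSnn, ht.le]
      have hfin : Real.sqrt (∑ i, (lam i - 1) ^ 2) ≤ c * (t ^ n)⁻¹ * (P - 1) := by
        apply sqrt_le_of_sq' hterm1nn
        have he : (c * (t ^ n)⁻¹ * (P - 1)) ^ 2 = (c * (P - 1)) ^ 2 / (t ^ n) ^ 2 := by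
          field_simp
        rw [he, le_div_iff₀ (pow_pos htnpos 2)]
        exact hss
      linarith
    · -- large regime
      push_neg at hcase2
      have hs3 : ∀ i, (lam i - 1) ^ 2 * τ ^ 2 ≤ 9 * P ^ 2 := by
        intro i
        have h1 := hcap i
        have h2 : 0 ≤ lam i * τ := mul_nonneg (hpos i).le hτpos.le
        nlinarith [hτ1, hP1, mul_le_mul_of_nonneg_right h1 h2,
          mul_nonneg h2 hτpos.le, hτpos.le]
      have hsum3 : (∑ i, (lam i - 1) ^ 2) * τ ^ 2 ≤ (n:ℝ) * (9 * P ^ 2) := by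
        rw [Finset.sum_mul]
        calc ∑ i, (lam i - 1) ^ 2 * τ ^ 2 ≤ ∑ _i : Fin n, 9 * P ^ 2 :=
              Finset.sum_le_sum (fun i _ => hs3 i)
          _ = (n:ℝ) * (9 * P ^ 2) := by
              rw [Finset.sum_const, Finset.card_univ, Fintype.card_fin, nsmul_eq_mul]
      have hfin1 : Real.sqrt (∑ i, (lam i - 1) ^ 2) ≤ 3 * ((n:ℝ) + 1) * P / τ := by
        apply sqrt_le_of_sq'
          (div_nonneg (by nlinarith [hnn, hP1]) hτpos.le)
        rw [div_pow, le_div_iff₀ (pow_pos hτpos 2)]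
        nlinarith [hsum3, sq_nonneg P, hnn, mul_nonneg hnn (sq_nonneg P),
          mul_nonneg (mul_nonneg hnn hnn) (sq_nonneg P)]
      have hτtn : t ^ n ≤ τ := by
        rw [hτt]
        nlinarith [hτpos]
      have hi2 : τ⁻¹ ≤ (t ^ n)⁻¹ := by
        have := one_div_le_one_div_of_le htnpos hτtn
        simpa [one_div] using this
      have hfin2 : 3 * ((n:ℝ) + 1) * P / τ ≤ c * (t ^ n)⁻¹ * (P - 1) := by
        rw [div_eq_mul_inv]
        calc 3 * ((n:ℝ) + 1) * P * τ⁻¹ ≤ 6 * ((n:ℝ) + 1) * (P - 1) * τ⁻¹ := by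
              have hτi : (0:ℝ) < τ⁻¹ := inv_pos.2 hτpos
              nlinarith [mul_nonneg (mul_nonneg (show (0:ℝ) ≤ 3 * ((n:ℝ) + 1) by positivity)
                (show (0:ℝ) ≤ P - 2 by linarith)) hτi.le]
          _ ≤ 6 * ((n:ℝ) + 1) * (P - 1) * (t ^ n)⁻¹ := by
              apply mul_le_mul_of_nonneg_left hi2
              exact mul_nonneg (by positivity) hD0
          _ ≤ c * (t ^ n)⁻¹ * (P - 1) := by
              rw [hcdef]
              have h0 : 0 ≤ (t ^ n)⁻¹ * (P - 1) :=
                mul_nonneg (inv_nonneg.2 htnpos.le) hD0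
              nlinarith [mul_nonneg hnn h0, h0]
      linarith [hfin1.trans hfin2]
end

section
/- For every integer n ≥ 2, every t ∈ (0, 1/2] and every λ > 0, one has (t + (1−t)λ^{1−n})·(t + (1−t)λ)^{n−1} − 1 ≥ (t/8)·(log λ)². -/
/-- Weighted AM-GM two-point special case: `x^θ ≤ 1 - θ + θ x`. -/
lemma bern_aux {x θ : ℝ} (hx : 0 ≤ x) (h0 : 0 ≤ θ) (h1 : θ ≤ 1) :
    x ^ θ ≤ 1 - θ + θ * x := by
  have h := Real.geom_mean_le_arith_mean2_weighted (by linarith : (0:ℝ) ≤ 1 - θ)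
    h0 zero_le_one hx (by ring)
  simpa using h

lemma cosh_aux (y : ℝ) : 2 + y ^ 2 / 4 ≤ Real.exp y + Real.exp (-y) := by
  have key : ∀ z : ℝ, 0 ≤ z → 2 + z ^ 2 / 4 ≤ Real.exp z + Real.exp (-z) := by
    intro z hz
    have h1 : z / 2 + 1 ≤ Real.exp (z / 2) := Real.add_one_le_exp (z / 2)
    have h2 : -z + 1 ≤ Real.exp (-z) := Real.add_one_le_exp (-z)
    have h3 : Real.exp (z / 2) * Real.exp (z / 2) = Real.exp z := by
      rw [← Real.exp_add]; ring_nf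
    nlinarith [sq_nonneg (z / 2), Real.exp_pos (z / 2)]
  rcases le_total 0 y with h | h
  · exact key y h
  · have := key (-y) (by linarith); simpa [neg_neg, add_comm] using this

/-- The key one-variable inequality from the proof of Lemma 3.7: for `n ≥ 2`, `t ∈ (0,1/2]`
and `λ > 0`, `(t + (1-t)λ^{1-n})(t + (1-t)λ)^{n-1} - 1 ≥ (t/8)(log λ)²`. -/
theorem one_variable_lambda_bound (n : ℕ) (t l : ℝ) (hn : 2 ≤ n)
    (ht : 0 < t) (ht' : t ≤ 1 / 2) (hl : 0 < l) :
    t / 8 * Real.log l ^ 2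
      ≤ (t + (1 - t) * l ^ ((1 : ℝ) - n)) * (t + (1 - t) * l) ^ (n - 1) - 1 := by
  set m : ℕ := n - 1 with hm
  have hm1 : 1 ≤ m := by omega
  have hmn : (n : ℝ) = (m : ℝ) + 1 := by
    have h : n = m + 1 := by omega
    rw [h]; push_cast; ring
  have hexp : (1 : ℝ) - n = -(m : ℝ) := by rw [hmn]; ring
  have h1t : (0:ℝ) < 1 - t := by linarith
  have hlne : (0:ℝ) ≤ l := hl.le
  set a : ℝ := (1 - t) * ((m : ℝ) - 1) with ha
  have hmRpos : (0:ℝ) < (m:ℝ) := by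
    have h0 : 0 < m := hm1
    exact_mod_cast h0
  have hmne : (m:ℝ) ≠ 0 := ne_of_gt hmRpos
  have hmR1 : (1:ℝ) ≤ (m:ℝ) := by exact_mod_cast hm1
  have ha0 : 0 ≤ a := by
    have h0 : (0:ℝ) ≤ (m:ℝ) - 1 := by linarith
    positivity
  have ham : a + 1 ≤ (m:ℝ) := by nlinarith
  have hB : 0 < t + (1 - t) * l := by positivity
  have hBi : 0 < t + (1 - t) * l⁻¹ := by positivity
  -- Step A : l^a * (t+(1-t)l) ≤ (t+(1-t)l)^m
  have amgm : l ^ (1 - t) ≤ t + (1 - t) * l := by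
    have h := bern_aux hlne (le_of_lt h1t) (by linarith : (1:ℝ) - t ≤ 1)
    linarith
  have hA : l ^ a * (t + (1 - t) * l) ≤ (t + (1 - t) * l) ^ m := by
    have hpow : (l ^ (1 - t)) ^ (m - 1) ≤ (t + (1 - t) * l) ^ (m - 1) :=
      pow_le_pow_left₀ (Real.rpow_nonneg hlne _) amgm _
    have hrw : (l ^ (1 - t)) ^ (m - 1) = l ^ a := by
      rw [← Real.rpow_natCast (l ^ (1 - t)) (m - 1), ← Real.rpow_mul hlne]
      congr 1
      have hc : ((m - 1 : ℕ) : ℝ) = (m : ℝ) - 1 := by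
        have h1 : (1:ℕ) ≤ m := hm1
        push_cast [Nat.cast_sub h1]; ring
      rw [hc, ha]
    calc l ^ a * (t + (1 - t) * l) = (l ^ (1 - t)) ^ (m - 1) * (t + (1 - t) * l) := by
          rw [hrw]
      _ ≤ (t + (1 - t) * l) ^ (m - 1) * (t + (1 - t) * l) :=
          mul_le_mul_of_nonneg_right hpow hB.le
      _ = (t + (1 - t) * l) ^ m := by
          rw [← pow_succ]; congr 1; omega
  -- Step B : l^(-a) * (t+(1-t)l⁻¹) ≤ t + (1-t) * l^(-(m:ℝ))
  have hXpos : (0:ℝ) ≤ l ^ (-(m:ℝ)) := Real.rpow_nonneg hlne _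
  have hb1 : l ^ (-a) ≤ 1 - a / (m:ℝ) + a / (m:ℝ) * l ^ (-(m:ℝ)) := by
    have h := bern_aux hXpos (x := l ^ (-(m:ℝ))) (θ := a / (m:ℝ))
      (by positivity) (by rw [div_le_one hmRpos]; linarith)
    have hrw : (l ^ (-(m:ℝ))) ^ (a / (m:ℝ)) = l ^ (-a) := by
      rw [← Real.rpow_mul hlne]
      congr 1
      field_simp
    rwa [hrw] at h
  have hb2 : l ^ (-(a+1)) ≤ 1 - (a+1) / (m:ℝ) + (a+1) / (m:ℝ) * l ^ (-(m:ℝ)) := by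
    have h := bern_aux hXpos (x := l ^ (-(m:ℝ))) (θ := (a+1) / (m:ℝ))
      (by positivity) (by rw [div_le_one hmRpos]; linarith)
    have hrw : (l ^ (-(m:ℝ))) ^ ((a+1) / (m:ℝ)) = l ^ (-(a+1)) := by
      rw [← Real.rpow_mul hlne]
      congr 1
      field_simp
    rwa [hrw] at h
  have hB2 : l ^ (-a) * (t + (1 - t) * l⁻¹) ≤ t + (1 - t) * l ^ (-(m:ℝ)) := by
    have hsplit : l ^ (-a) * (t + (1 - t) * l⁻¹)
        = t * l ^ (-a) + (1 - t) * l ^ (-(a+1)) := by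
      have h1 : l ^ (-(a+1)) = l ^ (-a) * l⁻¹ := by
        rw [← Real.rpow_neg_one l, ← Real.rpow_add hl]; congr 1; ring
      rw [h1]; ring
    rw [hsplit]
    have hc : t * (1 - a / (m:ℝ) + a / (m:ℝ) * l ^ (-(m:ℝ)))
        + (1 - t) * (1 - (a+1) / (m:ℝ) + (a+1) / (m:ℝ) * l ^ (-(m:ℝ)))
        = t + (1 - t) * l ^ (-(m:ℝ)) := by
      field_simp
      ring
    nlinarith [mul_le_mul_of_nonneg_left hb1 ht.le,
      mul_le_mul_of_nonneg_left hb2 h1t.le]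
  -- combine the two steps
  have hone : l ^ (-a) * l ^ a = 1 := by
    rw [← Real.rpow_add hl]; simp
  have hprod : (t + (1 - t) * l⁻¹) * (t + (1 - t) * l)
      ≤ (t + (1 - t) * l ^ (-(m:ℝ))) * (t + (1 - t) * l) ^ m := by
    have hmul := mul_le_mul hB2 hA (by positivity) (by positivity)
    have he : (l ^ (-a) * (t + (1 - t) * l⁻¹)) * (l ^ a * (t + (1 - t) * l))
        = (l ^ (-a) * l ^ a) * ((t + (1 - t) * l⁻¹) * (t + (1 - t) * l)) := by ring
    rw [he, hone, one_mul] at hmul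
    exact hmul
  -- the n = 2 type bound
  have hlog : Real.log l ^ 2 / 4 ≤ l + l⁻¹ - 2 := by
    have h := cosh_aux (Real.log l)
    rw [Real.exp_log hl, ← Real.log_inv, Real.exp_log (by positivity)] at h
    linarith
  have h4 : (t + (1 - t) * l⁻¹) * (t + (1 - t) * l) - 1
      = t * (1 - t) * (l + l⁻¹ - 2) := by
    field_simp
    ring
  have hq : 0 ≤ t * (1 - t) := by positivity
  have h3 : t * (1 - t) * (Real.log l ^ 2 / 4) ≤ t * (1 - t) * (l + l⁻¹ - 2) :=
    mul_le_mul_of_nonneg_left hlog hq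
  have h2 : t / 8 * Real.log l ^ 2 ≤ t * (1 - t) * (Real.log l ^ 2 / 4) := by
    have hhalf : t / 2 ≤ t * (1 - t) := by
      have h5 : 0 ≤ t * (1 / 2 - t) := mul_nonneg ht.le (by linarith)
      have h6 : t * (1 / 2 - t) = t * (1 - t) - t / 2 := by ring
      linarith
    have hhh := mul_le_mul_of_nonneg_right hhalf (sq_nonneg (Real.log l))
    linarith
  have hfin : t / 8 * Real.log l ^ 2
      ≤ (t + (1 - t) * l⁻¹) * (t + (1 - t) * l) - 1 := by linarith
  rw [hexp]
  linarith [hprod, hfin]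
end

section
/- For every n ∈ ℕ, every t ∈ (0,1), every ε ∈ (0,1] and every ℓ > 0, there exists μ = μ_{n,t,ε,ℓ} > 0 such that the following holds. If A, B ⊆ ℝ^n are (γ,ℓ,λ,μ)-conelike sets (for any γ ≥ 0 and λ > 0) with convex witnesses C_A, C_B, then tA + (1−t)B ⊇ t(1−ε/4)C_A + (1−t)C_B. -/
open MeasureTheory Pointwise
open scoped RealInnerProductSpace

noncomputable section

set_option maxHeartbeats 1000000 in
/-- **Filling lemma** (Lemma 3.12).  For conelike sets `A, B` with witnesses `C_A, C_B` and `μ`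
small enough (depending on `n, t, ε, ℓ`), `tA + (1-t)B ⊇ t(1-ε/4)C_A + (1-t)C_B`. -/
theorem lem_filling (n : ℕ) (t ε ℓ : ℝ) (ht : 0 < t) (ht' : t < 1)
    (hε : 0 < ε) (hε' : ε ≤ 1) (hℓ : 0 < ℓ) :
    ∃ μ : ℝ, 0 < μ ∧
      ∀ (γ lam : ℝ) (A B CA CB : Set (EuclideanSpace ℝ (Fin n))),
        0 ≤ γ → 0 < lam →
        Conelike γ ℓ lam μ A B CA CB →
        (t * (1 - ε / 4)) • CA + (1 - t) • CB ⊆ t • A + (1 - t) • B := by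
  have hℓ2 : (0:ℝ) < ℓ^2 + 1 := by positivity
  set d : ℝ := t * ε / 4 with hd
  have hd0 : 0 < d := by rw [hd]; positivity
  have hd4 : d < 1/4 := by rw [hd]; nlinarith
  set μ : ℝ := d / (2 * (ℓ^2 + 1)) with hμdef
  have hμ0 : 0 < μ := by rw [hμdef]; positivity
  have hμd : μ ≤ d / 2 := by
    rw [hμdef, div_le_div_iff₀ (by positivity) (by norm_num)]
    nlinarith [sq_nonneg ℓ]
  have hμeq : μ * (2 * (ℓ^2 + 1)) = d := by
    rw [hμdef]; field_simp
  have h1μ : (0:ℝ) < 1 + μ := by linarith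
  set c : ℝ := (1 + μ) * (1 - d) with hc
  have h1c : d/2 ≤ 1 - c := by
    have : 0 ≤ d * μ := by positivity
    rw [hc]; nlinarith
  have h1c0 : (0:ℝ) < 1 - c := by linarith
  have hc0 : (0:ℝ) < c := by rw [hc]; nlinarith
  have hcne : c ≠ 0 := hc0.ne'
  have h1cne : (1:ℝ) - c ≠ 0 := h1c0.ne'
  have key : μ * ℓ^2 < 1 - c := by nlinarith
  have htd : 0 ≤ t - d := by rw [hd]; nlinarith
  have hsc : (1+μ)*(d/(1-c)) - 1 = μ/(1-c) := by
    field_simp; rw [hc]; ring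
  refine ⟨μ, hμ0, ?_⟩
  rintro γ lam A B CA CB hγ hlam ⟨S'', z, core⟩
  obtain ⟨K, x₀, y₀, hK, hKA, hKCA, hKB, hKCB, hAK, hCAK, hBK, hCBK⟩ := core.sandwich
  -- 0 ∈ CA
  have h0CA : (0 : EuclideanSpace ℝ (Fin n)) ∈ CA :=
    core.ball_subset_CA (by simpa using (by positivity : (0:ℝ) < 1/ℓ))
  -- halving step
  have hhalf : ∀ p : EuclideanSpace ℝ (Fin n), p ∈ (1+μ) • K → (1/(1+μ)) • p ∈ K := by
    rintro p ⟨k, hk, rfl⟩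
    rw [smul_smul, one_div, inv_mul_cancel₀ h1μ.ne', one_smul]
    exact hk
  have hx₀vadd : x₀ ∈ x₀ +ᵥ CA := Set.mem_vadd_set.mpr ⟨0, h0CA, by simp⟩
  have hx₀K : ∀ k : ℕ, ((1/(1+μ))^(k+1)) • x₀ ∈ K := by
    intro k
    induction k with
    | zero => simpa using hhalf x₀ (hCAK hx₀vadd)
    | succ k ih =>
      have h2 := hhalf _ (hCAK (hKCA ih))
      rw [smul_smul] at h2
      have h3 : (1/(1+μ)) * (1/(1+μ))^(k+1) = (1/(1+μ))^(k+1+1) := by ring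
      rwa [h3] at h2
  -- bound on ‖x₀‖
  have hrpos : (0:ℝ) < 1/(1+μ) := by positivity
  have hr1 : 1/(1+μ) < 1 := by
    rw [div_lt_one h1μ]; linarith
  have hx₀ : ‖x₀‖ ≤ ℓ := by
    by_contra hcon
    push_neg at hcon
    have hx₀pos : 0 < ‖x₀‖ := lt_trans hℓ hcon
    obtain ⟨k, hk⟩ := exists_pow_lt_of_lt_one
      (show (0:ℝ) < (‖x₀‖ - ℓ)/‖x₀‖ from div_pos (by linarith) hx₀pos) hr1
    obtain ⟨a, haCA, hae⟩ := Set.mem_vadd_set.mp (hKCA (hx₀K k))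
    have hball : ‖a‖ < ℓ := by
      have := core.CA_subset_ball haCA
      rwa [mem_ball_zero_iff] at this
    have ha_eq : a = ((1/(1+μ))^(k+1) - 1) • x₀ := by
      have h4 : x₀ + a = ((1/(1+μ))^(k+1)) • x₀ := by
        rw [← hae]; simp [vadd_eq_add]
      have h5 : a = ((1/(1+μ))^(k+1)) • x₀ - x₀ := by
        rw [← h4]; abel
      rw [h5, sub_smul, one_smul]
    have hpow1 : (1/(1+μ))^(k+1) < 1 := pow_lt_one₀ hrpos.le hr1 (Nat.succ_ne_zero k)
    have hpow2 : (1/(1+μ))^(k+1) ≤ (1/(1+μ))^k :=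
      pow_le_pow_of_le_one hrpos.le hr1.le (Nat.le_succ k)
    have hmul : ((‖x₀‖ - ℓ)/‖x₀‖) * ‖x₀‖ = ‖x₀‖ - ℓ := by field_simp
    rw [ha_eq, norm_smul, Real.norm_eq_abs, abs_of_nonpos (by linarith)] at hball
    have h6 := mul_lt_mul_of_pos_right (lt_of_le_of_lt hpow2 hk) hx₀pos
    rw [hmul] at h6
    linarith
  -- the special point q ∈ K
  set q : EuclideanSpace ℝ (Fin n) := (d/(1-c)) • x₀ with hqdef
  have heq : (1+μ) • q - x₀ = (μ/(1-c)) • x₀ := by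
    rw [hqdef, smul_smul, ← hsc, sub_smul, one_smul]
  have hnorm : ‖(1+μ) • q - x₀‖ < 1/ℓ := by
    rw [heq, norm_smul, Real.norm_eq_abs, abs_of_nonneg (by positivity)]
    rw [div_mul_eq_mul_div, div_lt_div_iff₀ h1c0 hℓ]
    have hb1 : μ * ‖x₀‖ ≤ μ * ℓ := mul_le_mul_of_nonneg_left hx₀ hμ0.le
    have hb2 : μ * ‖x₀‖ * ℓ ≤ μ * ℓ * ℓ := mul_le_mul_of_nonneg_right hb1 hℓ.le
    have hb3 : μ * ℓ * ℓ = μ * ℓ^2 := by ring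
    linarith
  have hqK : q ∈ K := by
    have hmemCA : (1+μ) • q - x₀ ∈ CA := core.ball_subset_CA (mem_ball_zero_iff.mpr hnorm)
    have hmem : (1+μ) • q ∈ (1+μ) • K := by
      refine hCAK (Set.mem_vadd_set.mpr ⟨(1+μ) • q - x₀, hmemCA, ?_⟩)
      simp [vadd_eq_add]
    exact (Set.smul_mem_smul_set_iff₀ h1μ.ne' K q).mp hmem
  -- main inclusion
  rintro x hx
  rw [Set.mem_add] at hx
  obtain ⟨u, hu, v, hv, rfl⟩ := hx
  obtain ⟨a, ha, rfl⟩ := hu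
  obtain ⟨b, hb, rfl⟩ := hv
  obtain ⟨k₁, hk₁, e₁⟩ := hCAK (Set.mem_vadd_set.mpr ⟨a, ha, rfl⟩)
  obtain ⟨k₂, hk₂, e₂⟩ := hCBK (Set.mem_vadd_set.mpr ⟨b, hb, rfl⟩)
  have e₁' : (1+μ) • k₁ = x₀ + a := by simpa [vadd_eq_add] using e₁
  have e₂' : (1+μ) • k₂ = y₀ + b := by simpa [vadd_eq_add] using e₂
  set α : ℝ := (t - d)*(1+μ)/c with hα
  set β : ℝ := (1 - t)*(1+μ)/c with hβ
  have hα0 : 0 ≤ α := div_nonneg (mul_nonneg htd h1μ.le) hc0.le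
  have hβ0 : 0 ≤ β := div_nonneg (mul_nonneg (by linarith) h1μ.le) hc0.le
  have hαβ : α + β = 1 := by
    rw [hα, hβ]; field_simp; rw [hc]; ring
  have hm : α • k₁ + β • k₂ ∈ K := hK hk₁ hk₂ hα0 hβ0 hαβ
  have hw : c • (α • k₁ + β • k₂) + (1 - c) • q ∈ K :=
    hK hm hqK hc0.le h1c0.le (by ring)
  set w : EuclideanSpace ℝ (Fin n) := c • (α • k₁ + β • k₂) + (1 - c) • q with hwdef
  have hcα : c * α = (t-d)*(1+μ) := by rw [hα]; field_simp
  have hcβ : c * β = (1-t)*(1+μ) := by rw [hβ]; field_simp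
  have h1cq : (1-c) • q = d • x₀ := by
    rw [hqdef, smul_smul, mul_div_cancel₀ _ h1cne]
  have hw_eq : w = (t-d) • (x₀ + a) + (1-t) • (y₀ + b) + d • x₀ := by
    rw [hwdef, smul_add, smul_smul, smul_smul, hcα, hcβ, h1cq, mul_smul, mul_smul,
      e₁', e₂']
  obtain ⟨a', ha', ea'⟩ := Set.mem_vadd_set.mp (hKA hw)
  obtain ⟨b', hb', eb'⟩ := Set.mem_vadd_set.mp (hKB hw)
  have ha'' : a' = w - x₀ := by
    have : x₀ + a' = w := by rw [← ea']; simp [vadd_eq_add]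
    rw [← this]; abel
  have hb'' : b' = w - y₀ := by
    have : y₀ + b' = w := by rw [← eb']; simp [vadd_eq_add]
    rw [← this]; abel
  have hfinal : (t * (1 - ε / 4)) • a + (1 - t) • b = t • a' + (1-t) • b' := by
    rw [ha'', hb'', hw_eq, hd]
    module
  rw [hfinal]
  exact Set.add_mem_add (Set.smul_mem_smul_set ha') (Set.smul_mem_smul_set hb')


end
end

section
/- Let n ∈ ℕ, ℓ ≥ 1, and let Y ⊆ ℝ^n be a convex set with B(0, 1/ℓ) ⊆ Y ⊆ B(0, ℓ). Let x ∈ B(0, ℓ) \ Y and let y be a point of the topological boundary ∂Y lying on the segment [0, x]. Then |x − y| ≤ ℓ² · d(x, Y), where d(x,Y) is the Euclidean distance from x to Y. -/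
/-- The claim in the proof of Proposition 3.6: if `Y` is convex with
`B(0,1/ℓ) ⊆ Y ⊆ B(0,ℓ)`, `x ∈ B(0,ℓ) \ Y`, and `y ∈ ∂Y` lies on the segment `[0,x]`,
then `|x − y| ≤ ℓ² d(x,Y)`. -/
theorem radial_point_dist_bound (n : ℕ) (ℓ : ℝ) (Y : Set (EuclideanSpace ℝ (Fin n)))
    (x y : EuclideanSpace ℝ (Fin n)) (hℓ : 1 ≤ ℓ)
    (hY : Convex ℝ Y)
    (hball : Metric.ball 0 (1 / ℓ) ⊆ Y) (hball' : Y ⊆ Metric.ball 0 ℓ)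
    (hx : x ∈ Metric.ball (0 : EuclideanSpace ℝ (Fin n)) ℓ) (hxY : x ∉ Y)
    (hy : y ∈ frontier Y) (hseg : y ∈ segment ℝ 0 x) :
    ‖x - y‖ ≤ ℓ ^ 2 * Metric.infDist x Y := by
  have hℓ0 : (0:ℝ) < ℓ := lt_of_lt_of_le one_pos hℓ
  have h0i : (0 : EuclideanSpace ℝ (Fin n)) ∈ interior Y := by
    apply interior_maximal hball Metric.isOpen_ball
    simp [Metric.mem_ball, hℓ0]
  have hyni : y ∉ interior Y := hy.2
  obtain ⟨f, hf⟩ := geometric_hahn_banach_open_point hY.interior isOpen_interior hyni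
  have hfy0 : 0 < f y := by simpa using hf 0 h0i
  -- f z ≤ f y on the closure of Y
  have hclos : ∀ z ∈ closure Y, f z ≤ f y := by
    intro z hz
    by_contra h
    push_neg at h
    have hfz0 : 0 < f z := hfy0.trans h
    set t : ℝ := (f z - f y) / (2 * f z) with ht
    have ht0 : 0 < t := div_pos (by linarith) (by positivity)
    have ht1 : t ≤ 1 := by
      rw [div_le_one (by positivity)]
      linarith
    have hmem : z + t • ((0 : EuclideanSpace ℝ (Fin n)) - z) ∈ interior Y :=
      hY.add_smul_sub_mem_interior' hz h0i ⟨ht0, ht1⟩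
    have := hf _ hmem
    simp only [map_add, map_smul, map_sub, map_zero, smul_eq_mul] at this
    -- f z + t * (0 - f z) < f y
    have : f z - t * f z < f y := by linarith
    have hts : t * f z = (f z - f y) / 2 := by
      rw [ht]; field_simp
    rw [hts] at this
    linarith
  -- closed ball of radius 1/ℓ is in the closure of Y
  have hcb : Metric.closedBall (0 : EuclideanSpace ℝ (Fin n)) (1/ℓ) ⊆ closure Y := by
    rw [← closure_ball (0 : EuclideanSpace ℝ (Fin n)) (by positivity : (1/ℓ : ℝ) ≠ 0)]
    exact closure_mono hball
  -- norm bound on f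
  have hnorm : ‖f‖ ≤ ℓ * f y := by
    apply f.opNorm_le_bound (by positivity)
    intro z
    rcases eq_or_ne z 0 with rfl | hz0
    · simp
    · have hnz : 0 < ‖z‖ := norm_pos_iff.mpr hz0
      have key : ∀ (w : EuclideanSpace ℝ (Fin n)), ‖w‖ = ‖z‖ → f w ≤ ℓ * f y * ‖z‖ := by
        intro w hw
        have : (ℓ * ‖z‖)⁻¹ • w ∈ Metric.closedBall (0 : EuclideanSpace ℝ (Fin n)) (1/ℓ) := by
          simp only [Metric.mem_closedBall, dist_zero_right, norm_smul, norm_inv,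
            Real.norm_eq_abs, abs_of_pos (by positivity : (0:ℝ) < ℓ * ‖z‖), hw]
          rw [inv_mul_le_iff₀ (by positivity)]
          field_simp
          exact le_rfl
        have hle := hclos _ (hcb this)
        rw [map_smul, smul_eq_mul, inv_mul_le_iff₀ (by positivity)] at hle
        calc f w ≤ ℓ * ‖z‖ * f y := hle
          _ = ℓ * f y * ‖z‖ := by ring
      have h1 := key z rfl
      have h2 := key (-z) (by simp)
      rw [map_neg] at h2
      rw [Real.norm_eq_abs, abs_le]
      constructor <;> nlinarith
  have hfne : ‖f‖ ≠ 0 := by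
    intro h
    have : f = 0 := norm_eq_zero.mp h
    rw [this] at hfy0; simp at hfy0
  have hfpos : 0 < ‖f‖ := lt_of_le_of_ne (norm_nonneg f) (Ne.symm hfne)
  -- y = b • x
  obtain ⟨a, b, ha, hb, hab, H⟩ := hseg
  have hyb : y = b • x := by rw [← H]; simp
  have hb0 : 0 < b := by
    rcases lt_or_eq_of_le hb with h | h
    · exact h
    · exfalso; apply hyni; rw [hyb, ← h]; simpa using h0i
  have hb1 : b ≤ 1 := by linarith
  -- key quantities
  have hfyx : f y = b * f x := by rw [hyb, map_smul]; rfl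
  have hfx0 : 0 < f x := by
    have h : 0 < b * f x := hfyx ▸ hfy0
    rcases mul_pos_iff.mp h with ⟨_, h2⟩ | ⟨h1, _⟩
    · exact h2
    · linarith
  have hnxy : ‖x - y‖ = (1 - b) * ‖x‖ := by
    have : x - y = (1 - b) • x := by rw [hyb]; module
    rw [this, norm_smul, Real.norm_eq_abs, abs_of_nonneg (by linarith)]
  have hny : ‖y‖ ≤ ℓ := by
    have hyc : y ∈ closure Y := hy.1
    have : y ∈ Metric.closedBall (0 : EuclideanSpace ℝ (Fin n)) ℓ :=
      closure_minimal (hball'.trans Metric.ball_subset_closedBall) Metric.isClosed_closedBall hyc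
    simpa using this
  have hnyb : ‖y‖ = b * ‖x‖ := by
    rw [hyb, norm_smul, Real.norm_eq_abs, abs_of_pos hb0]
  -- lower bound on infDist
  have hinf : (f x - f y) / ‖f‖ ≤ Metric.infDist x Y := by
    by_contra h
    push_neg at h
    obtain ⟨z, hzY, hz⟩ := (Metric.infDist_lt_iff ⟨0, hball (by simp [Metric.mem_ball, hℓ0])⟩).mp h
    have h1 : f x - f z ≤ ‖f‖ * dist x z := by
      calc f x - f z = f (x - z) := by rw [map_sub]
        _ ≤ ‖f (x - z)‖ := le_abs_self _
        _ ≤ ‖f‖ * ‖x - z‖ := f.le_opNorm _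
        _ = ‖f‖ * dist x z := by rw [dist_eq_norm]
    have h2 : f z ≤ f y := hclos z (subset_closure hzY)
    have h3 : ‖f‖ * dist x z < ‖f‖ * ((f x - f y) / ‖f‖) :=
      mul_lt_mul_of_pos_left hz hfpos
    rw [mul_div_cancel₀ _ hfne] at h3
    linarith
  -- combine
  have hfinal : ‖x - y‖ ≤ ℓ ^ 2 * ((f x - f y) / ‖f‖) := by
    rw [← mul_div_assoc, le_div_iff₀ hfpos]
    rw [hnxy, hfyx]
    have hbx : b * ‖x‖ ≤ ℓ := hnyb ▸ hny
    have hnf : ‖f‖ ≤ ℓ * (b * f x) := by rwa [hfyx] at hnorm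
    nlinarith [norm_nonneg x, mul_nonneg (norm_nonneg x) hfx0.le,
      mul_le_mul_of_nonneg_right hnf (mul_nonneg (sub_nonneg.mpr hb1) (norm_nonneg x)),
      mul_le_mul_of_nonneg_right hbx (mul_nonneg (mul_nonneg hℓ0.le (sub_nonneg.mpr hb1)) hfx0.le)]
  calc ‖x - y‖ ≤ ℓ ^ 2 * ((f x - f y) / ‖f‖) := hfinal
    _ ≤ ℓ ^ 2 * Metric.infDist x Y := by
        apply mul_le_mul_of_nonneg_left hinf (by positivity)
end
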